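/- arXiv:2504.08730 — 5 statements merged into one kernel-verified Lean document; each statement's English description precedes it below -/
import Mathlib

section
/- Let H be a separable Hilbert space and A : H → H a non-negative, self-adjoint, trace-class operator with eigenpairs (λ_i, u_i) ordered by decreasing eigenvalues. Then over all rank-r orthogonal projections P on H, the minimum of Tr((I − P) A (I − P)) equals ∑_{i=r+1}^∞ λ_i, and this minimum is attained by P = ∑_{i=1}^r u_i ⊗ u_i. -/
set_option maxHeartbeats 1000000

open RealInnerProductSpace

section Aux

variable {H : Type*} [NormedAddCommGroup H] [InnerProductSpace ℝ H] [CompleteSpace H]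

/-- self-adjointness as a symmetry of the inner product -/
lemma aux_sym (A : H →L[ℝ] H) (hA : IsSelfAdjoint A) (x y : H) :
    ⟪A x, y⟫ = ⟪x, A y⟫ := by
  rw [← ContinuousLinearMap.adjoint_inner_left]
  rw [hA.adjoint_eq]

/-- eigen-expansion of the quadratic form -/
lemma aux_quad (A : H →L[ℝ] H) (hA : IsSelfAdjoint A) (lam : ℕ → ℝ)
    (u : HilbertBasis ℕ ℝ H) (heig : ∀ i, A (u i) = lam i • u i) (x : H) :
    HasSum (fun i => lam i * (⟪u i, x⟫ * ⟪u i, x⟫)) ⟪A x, x⟫ := by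
  have h := u.hasSum_inner_mul_inner (A x) x
  refine HasSum.congr_fun h fun i => ?_
  have : ⟪A x, (u i : H)⟫ = lam i * ⟪u i, x⟫ := by
    rw [aux_sym A hA, heig, real_inner_smul_right, real_inner_comm]
  rw [this]; ring

lemma aux_norm_one (u : HilbertBasis ℕ ℝ H) (i : ℕ) : ⟪(u i : H), u i⟫ = (1:ℝ) := by
  have := orthonormal_iff_ite.mp u.orthonormal i i
  simpa using this

/-- the trace value of (1-P)A(1-P) in the eigenbasis -/
lemma aux_trace (A : H →L[ℝ] H) (hA : IsSelfAdjoint A)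
    (lam : ℕ → ℝ) (u : HilbertBasis ℕ ℝ H)
    (heig : ∀ i, A (u i) = lam i • u i)
    (hlam : ∀ i, 0 ≤ lam i) (hdec : Antitone lam) (htc : Summable lam)
    (r : ℕ) (w : Fin r → H) (hw : Orthonormal ℝ w) (P : H →L[ℝ] H)
    (hP : ∀ x, P x = ∑ j, ⟪w j, x⟫ • w j) :
    ∑' i, ⟪(((1 : H →L[ℝ] H) - P) ∘L A ∘L ((1 : H →L[ℝ] H) - P)) (u i), u i⟫
      = (∑' i, lam i) - ∑ j, ⟪A (w j), w j⟫ := by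
  classical
  set c : ℕ → ℝ := fun i => ∑ j, ⟪w j, (u i : H)⟫ ^ 2 with hc
  set g : ℕ → ℝ := fun i => ⟪A (P (u i)), P (u i)⟫ with hgdef
  -- P is symmetric
  have hPsym : ∀ x y : H, ⟪P x, y⟫ = ⟪x, P y⟫ := by
    intro x y
    rw [hP, hP, sum_inner, inner_sum]
    refine Finset.sum_congr rfl fun j _ => ?_
    rw [real_inner_smul_left, real_inner_smul_right, real_inner_comm x (w j)]
    ring
  -- inner of u i with P (u i)
  have hcPu : ∀ i, ⟪(u i : H), P (u i)⟫ = c i := by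
    intro i
    rw [hP, inner_sum]
    refine Finset.sum_congr rfl fun j _ => ?_
    rw [real_inner_smul_right, real_inner_comm (u i : H) (w j), sq]
  -- pointwise formula
  have hf : ∀ i, ⟪(((1 : H →L[ℝ] H) - P) ∘L A ∘L ((1 : H →L[ℝ] H) - P)) (u i), u i⟫
      = lam i - 2 * (lam i * c i) + g i := by
    intro i
    have h1 : (((1 : H →L[ℝ] H) - P) ∘L A ∘L ((1 : H →L[ℝ] H) - P)) (u i)
        = A ((u i : H) - P (u i)) - P (A ((u i : H) - P (u i))) := by
      simp only [ContinuousLinearMap.comp_apply, ContinuousLinearMap.sub_apply,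
        ContinuousLinearMap.one_apply, map_sub]
      abel
    rw [h1, inner_sub_left, hPsym, ← inner_sub_right, map_sub]
    rw [inner_sub_left, inner_sub_right, inner_sub_right]
    have e1 : ⟪A (u i : H), u i⟫ = lam i := by
      rw [heig, real_inner_smul_left, aux_norm_one u i, mul_one]
    have e2 : ⟪A (u i : H), P (u i)⟫ = lam i * c i := by
      rw [heig, real_inner_smul_left, hcPu]
    have e3 : ⟪A (P (u i)), (u i : H)⟫ = lam i * c i := by
      rw [aux_sym A hA, heig, real_inner_smul_right, real_inner_comm, hcPu]
    rw [e1, e2, e3]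
    ring
  -- summability of squares of coefficients
  have hSsq : ∀ (x : H), Summable (fun i => ⟪(u i : H), x⟫ * ⟪(u i : H), x⟫) := by
    intro x
    have := (u.hasSum_inner_mul_inner x x).summable
    refine this.congr fun i => ?_
    rw [real_inner_comm x (u i : H)]
  -- summable lam * c
  have hSlc_j : ∀ j : Fin r, Summable (fun i => lam i * ⟪w j, (u i : H)⟫ ^ 2) := by
    intro j
    have hb : Summable (fun i => lam 0 * ⟪w j, (u i : H)⟫ ^ 2) := by
      refine ((hSsq (w j)).mul_left (lam 0)).congr fun i => ?_
      rw [real_inner_comm (u i : H) (w j), sq]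
    refine Summable.of_nonneg_of_le (fun i => mul_nonneg (hlam i) (sq_nonneg _))
      (fun i => ?_) hb
    have : lam i ≤ lam 0 := hdec (Nat.zero_le i)
    nlinarith [sq_nonneg (⟪w j, (u i : H)⟫), hlam i]
  have hSlc : Summable (fun i => lam i * c i) := by
    have : Summable (fun i => ∑ j : Fin r, lam i * ⟪w j, (u i : H)⟫ ^ 2) :=
      summable_sum (fun j _ => hSlc_j j)
    refine this.congr fun i => ?_
    rw [hc, Finset.mul_sum]
  -- tsum lam * c
  have hTlc_j : ∀ j : Fin r, ∑' i, lam i * ⟪w j, (u i : H)⟫ ^ 2 = ⟪A (w j), w j⟫ := by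
    intro j
    have h := aux_quad A hA lam u heig (w j)
    rw [← h.tsum_eq]
    refine tsum_congr fun i => ?_
    rw [real_inner_comm (w j)]
    ring
  have hTlc : ∑' i, lam i * c i = ∑ j, ⟪A (w j), w j⟫ := by
    calc ∑' i, lam i * c i = ∑' i, ∑ j : Fin r, lam i * ⟪w j, (u i : H)⟫ ^ 2 := by
          refine tsum_congr fun i => ?_; rw [hc, Finset.mul_sum]
      _ = ∑ j : Fin r, ∑' i, lam i * ⟪w j, (u i : H)⟫ ^ 2 :=
          Summable.tsum_finsetSum (fun j _ => hSlc_j j)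
      _ = ∑ j, ⟪A (w j), w j⟫ := by exact Finset.sum_congr rfl fun j _ => hTlc_j j
  -- g expansion
  have hg : ∀ i, g i = ∑ j : Fin r, ∑ k : Fin r,
      (⟪w j, (u i : H)⟫ * ⟪(u i : H), w k⟫) * ⟪A (w j), w k⟫ := by
    intro i
    rw [hgdef]
    simp only [hP, map_sum, map_smul, sum_inner, inner_sum, real_inner_smul_left,
      real_inner_smul_right, Finset.mul_sum]
    refine Finset.sum_congr rfl fun j _ => Finset.sum_congr rfl fun k _ => ?_
    rw [real_inner_comm (w k) (u i : H), aux_sym A hA (w k) (w j),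
      real_inner_comm (w k) (A (w j))]
    ring
  have hSp : ∀ j k : Fin r, Summable (fun i => ⟪w j, (u i : H)⟫ * ⟪(u i : H), w k⟫) :=
    fun j k => (u.hasSum_inner_mul_inner (w j) (w k)).summable
  have hSg : Summable g := by
    have : Summable (fun i => ∑ j : Fin r, ∑ k : Fin r,
        (⟪w j, (u i : H)⟫ * ⟪(u i : H), w k⟫) * ⟪A (w j), w k⟫) :=
      summable_sum fun j _ => summable_sum fun k _ => ((hSp j k).mul_right _)
    exact this.congr fun i => (hg i).symm
  have hTg : ∑' i, g i = ∑ j, ⟪A (w j), w j⟫ := by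
    calc ∑' i, g i
        = ∑ j : Fin r, ∑' i, ∑ k : Fin r,
            (⟪w j, (u i : H)⟫ * ⟪(u i : H), w k⟫) * ⟪A (w j), w k⟫ := by
          rw [← Summable.tsum_finsetSum (fun j _ => summable_sum fun k _ => ((hSp j k).mul_right _))]
          exact tsum_congr hg
      _ = ∑ j : Fin r, ∑ k : Fin r, ∑' i,
            (⟪w j, (u i : H)⟫ * ⟪(u i : H), w k⟫) * ⟪A (w j), w k⟫ :=
          Finset.sum_congr rfl fun j _ => Summable.tsum_finsetSum (fun k _ => ((hSp j k).mul_right _))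
      _ = ∑ j : Fin r, ∑ k : Fin r, ⟪w j, w k⟫ * ⟪A (w j), w k⟫ := by
          refine Finset.sum_congr rfl fun j _ => Finset.sum_congr rfl fun k _ => ?_
          rw [tsum_mul_right, (u.hasSum_inner_mul_inner (w j) (w k)).tsum_eq]
      _ = ∑ j, ⟪A (w j), w j⟫ := by
          refine Finset.sum_congr rfl fun j _ => ?_
          rw [Finset.sum_eq_single j]
          · rw [orthonormal_iff_ite.mp hw j j]; simp
          · intro k _ hk
            rw [orthonormal_iff_ite.mp hw j k, if_neg (fun h => hk h.symm)]; ring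
          · simp
  -- assemble
  have key : ∑' i, ⟪(((1 : H →L[ℝ] H) - P) ∘L A ∘L ((1 : H →L[ℝ] H) - P)) (u i), u i⟫
      = ∑' i, (lam i - 2 * (lam i * c i) + g i) := tsum_congr hf
  rw [key]
  rw [Summable.tsum_add ((htc.sub (hSlc.mul_left 2))) hSg, Summable.tsum_sub htc (hSlc.mul_left 2),
    tsum_mul_left, hTlc, hTg]
  ring

/-- Ky Fan type inequality -/
lemma aux_kyfan (A : H →L[ℝ] H) (hA : IsSelfAdjoint A)
    (lam : ℕ → ℝ) (u : HilbertBasis ℕ ℝ H)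
    (heig : ∀ i, A (u i) = lam i • u i)
    (hlam : ∀ i, 0 ≤ lam i) (hdec : Antitone lam) (htc : Summable lam)
    (r : ℕ) (w : Fin r → H) (hw : Orthonormal ℝ w) :
    ∑ j, ⟪A (w j), w j⟫ ≤ ∑ i ∈ Finset.range r, lam i := by
  classical
  set c : ℕ → ℝ := fun i => ∑ j, ⟪w j, (u i : H)⟫ ^ 2 with hc
  have hc0 : ∀ i, 0 ≤ c i := fun i => Finset.sum_nonneg fun j _ => sq_nonneg _
  have hc1 : ∀ i, c i ≤ 1 := by
    intro i
    have h := Orthonormal.sum_inner_products_le (u i : H) (s := Finset.univ) hw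
    have hn : ‖(u i : H)‖ = 1 := u.orthonormal.1 i
    calc c i = ∑ j : Fin r, ‖⟪w j, (u i : H)⟫‖ ^ 2 := by
          refine Finset.sum_congr rfl fun j _ => ?_
          rw [Real.norm_eq_abs, sq_abs]
      _ ≤ ‖(u i : H)‖ ^ 2 := h
      _ = 1 := by rw [hn]; norm_num
  have hSc_j : ∀ j : Fin r, Summable (fun i => ⟪w j, (u i : H)⟫ ^ 2) := by
    intro j
    have := (u.hasSum_inner_mul_inner (w j) (w j)).summable
    refine this.congr fun i => ?_
    rw [real_inner_comm (w j) (u i : H), sq]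
  have hTc_j : ∀ j : Fin r, ∑' i, ⟪w j, (u i : H)⟫ ^ 2 = 1 := by
    intro j
    have h := u.hasSum_inner_mul_inner (w j) (w j)
    have h2 : ∑' i, ⟪w j, (u i : H)⟫ * ⟪(u i : H), w j⟫ = 1 := by
      rw [h.tsum_eq, orthonormal_iff_ite.mp hw j j, if_pos rfl]
    calc ∑' i, ⟪w j, (u i : H)⟫ ^ 2
        = ∑' i, ⟪w j, (u i : H)⟫ * ⟪(u i : H), w j⟫ := by
          refine tsum_congr fun i => ?_
          rw [real_inner_comm (u i : H) (w j), sq]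
      _ = 1 := h2
  have hSc : Summable c := summable_sum (fun j _ => hSc_j j)
  have hTc : ∑' i, c i = (r : ℝ) := by
    rw [hc, Summable.tsum_finsetSum (fun j _ => hSc_j j)]
    rw [Finset.sum_congr rfl fun j _ => hTc_j j]
    simp
  -- S = ∑' lam * c
  have hSlc_j : ∀ j : Fin r, Summable (fun i => lam i * ⟪w j, (u i : H)⟫ ^ 2) := by
    intro j
    refine Summable.of_nonneg_of_le (fun i => mul_nonneg (hlam i) (sq_nonneg _))
      (fun i => ?_) (((hSc_j j).mul_left (lam 0)))
    have : lam i ≤ lam 0 := hdec (Nat.zero_le i)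
    nlinarith [sq_nonneg (⟪w j, (u i : H)⟫), hlam i]
  have hSlc : Summable (fun i => lam i * c i) := by
    have : Summable (fun i => ∑ j : Fin r, lam i * ⟪w j, (u i : H)⟫ ^ 2) :=
      summable_sum (fun j _ => hSlc_j j)
    refine this.congr fun i => ?_
    rw [hc, Finset.mul_sum]
  have hS : ∑ j, ⟪A (w j), w j⟫ = ∑' i, lam i * c i := by
    rw [show (fun i => lam i * c i) = fun i => ∑ j : Fin r, lam i * ⟪w j, (u i : H)⟫ ^ 2
      from funext fun i => by rw [hc, Finset.mul_sum]]
    rw [Summable.tsum_finsetSum (fun j _ => hSlc_j j)]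
    refine Finset.sum_congr rfl fun j _ => ?_
    have h := aux_quad A hA lam u heig (w j)
    rw [← h.tsum_eq]
    refine tsum_congr fun i => ?_
    rw [real_inner_comm (u i : H) (w j)]
    ring
  rw [hS]
  -- split at r
  have hsplit := Summable.sum_add_tsum_nat_add (f := fun i => lam i * c i) r hSlc
  have hsplitc := Summable.sum_add_tsum_nat_add (f := c) r hSc
  have hs1 : Summable (fun i => lam (i + r) * c (i + r)) :=
    (summable_nat_add_iff (f := fun i => lam i * c i) r).mpr hSlc
  have hs2 : Summable (fun i => c (i + r)) := (summable_nat_add_iff (f := c) r).mpr hSc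
  have htail_le : ∑' i, lam (i + r) * c (i + r) ≤ lam r * ∑' i, c (i + r) := by
    rw [← tsum_mul_left]
    refine Summable.tsum_le_tsum (fun i => ?_) hs1 (hs2.mul_left _)
    have h1 : lam (i + r) ≤ lam r := hdec (Nat.le_add_left r i)
    nlinarith [hc0 (i + r)]
  have htailc : ∑' i, c (i + r) = (r : ℝ) - ∑ i ∈ Finset.range r, c i := by
    rw [← hTc]; linarith [hsplitc]
  have hfinal : ∑ i ∈ Finset.range r, lam i * c i
      + lam r * ((r : ℝ) - ∑ i ∈ Finset.range r, c i) ≤ ∑ i ∈ Finset.range r, lam i := by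
    have : ∑ i ∈ Finset.range r, lam i * c i
        + lam r * ((r : ℝ) - ∑ i ∈ Finset.range r, c i)
        = ∑ i ∈ Finset.range r, (lam i * c i + lam r * (1 - c i)) := by
      rw [Finset.sum_add_distrib, ← Finset.mul_sum]
      congr 1
      rw [Finset.sum_sub_distrib, Finset.sum_const, Finset.card_range]
      simp
    rw [this]
    refine Finset.sum_le_sum fun i hi => ?_
    have hle : lam r ≤ lam i := hdec (le_of_lt (Finset.mem_range.mp hi))
    nlinarith [hc0 i, hc1 i]
  calc ∑' i, lam i * c i
      = ∑ i ∈ Finset.range r, lam i * c i + ∑' i, lam (i + r) * c (i + r) := by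
        linarith [hsplit]
    _ ≤ ∑ i ∈ Finset.range r, lam i * c i + lam r * ((r:ℝ) - ∑ i ∈ Finset.range r, c i) := by
        rw [← htailc]; linarith [htail_le]
    _ ≤ ∑ i ∈ Finset.range r, lam i := hfinal

end Aux

/-- **Trace minimization.** Let `A` be a non-negative, self-adjoint, trace-class operator on a
separable Hilbert space `H`, with a Hilbert basis `u` of eigenvectors and eigenvalues
`lam 0 ≥ lam 1 ≥ ...` (summable, i.e. trace class).  Rank-`r` orthogonal projections are exactly
the operators `P x = ∑_{i<r} ⟪w i, x⟫ • w i` for orthonormal `w`.  The trace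
`Tr((I - P) A (I - P))`, computed in the eigenbasis `u`, attains its minimum over all rank-`r`
orthogonal projections, the minimum value is `∑_{i≥r} lam i`, and it is attained by the
projection `P₀ = ∑_{i<r} u i ⊗ u i` onto the top `r` eigenvectors. -/
theorem stmt_1 {H : Type*} [NormedAddCommGroup H] [InnerProductSpace ℝ H] [CompleteSpace H]
    (A : H →L[ℝ] H) (hA : IsSelfAdjoint A)
    (hpos : ∀ x : H, 0 ≤ ⟪A x, x⟫)
    (lam : ℕ → ℝ) (u : HilbertBasis ℕ ℝ H)
    (heig : ∀ i, A (u i) = lam i • u i)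
    (hdec : Antitone lam) (htc : Summable lam)
    (r : ℕ)
    (P₀ : H →L[ℝ] H)
    (hP₀ : P₀ = ∑ i : Fin r, (innerSL ℝ (u (i : ℕ))).smulRight (u (i : ℕ))) :
    IsLeast
      {t : ℝ | ∃ P : H →L[ℝ] H,
        (∃ w : Fin r → H, Orthonormal ℝ w ∧ ∀ x, P x = ∑ i, ⟪w i, x⟫ • w i) ∧
        t = ∑' i, ⟪(((1 : H →L[ℝ] H) - P) ∘L A ∘L ((1 : H →L[ℝ] H) - P)) (u i), u i⟫}
      (∑' i, lam (i + r)) ∧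
    (∑' i, ⟪(((1 : H →L[ℝ] H) - P₀) ∘L A ∘L ((1 : H →L[ℝ] H) - P₀)) (u i), u i⟫)
      = ∑' i, lam (i + r) := by
  have hone : ∀ i, ⟪(u i : H), u i⟫ = (1:ℝ) := aux_norm_one u
  have hlam : ∀ i, 0 ≤ lam i := by
    intro i
    have h := hpos (u i)
    rwa [heig, real_inner_smul_left, hone, mul_one] at h
  have hP₀app : ∀ x, P₀ x = ∑ j : Fin r, ⟪((u (j:ℕ)) : H), x⟫ • ((u (j:ℕ)) : H) := by
    intro x
    rw [hP₀]
    simp [ContinuousLinearMap.sum_apply, ContinuousLinearMap.smulRight_apply, innerSL_apply_apply]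
  have hwu : Orthonormal ℝ (fun j : Fin r => ((u (j:ℕ)) : H)) :=
    u.orthonormal.comp _ Fin.val_injective
  have hsum_r : (∑ j : Fin r, ⟪A ((u (j:ℕ)) : H), ((u (j:ℕ)) : H)⟫)
      = ∑ i ∈ Finset.range r, lam i := by
    rw [← Fin.sum_univ_eq_sum_range (fun i => lam i) r]
    refine Finset.sum_congr rfl fun j _ => ?_
    rw [heig, real_inner_smul_left, hone, mul_one]
  have hmin : (∑' i, lam i) - ∑ i ∈ Finset.range r, lam i = ∑' i, lam (i + r) := by
    have h := Summable.sum_add_tsum_nat_add (f := lam) r htc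
    linarith
  have htr := aux_trace A hA lam u heig hlam hdec htc r _ hwu P₀ hP₀app
  have hval : (∑' i, ⟪(((1 : H →L[ℝ] H) - P₀) ∘L A ∘L ((1 : H →L[ℝ] H) - P₀)) (u i), u i⟫)
      = ∑' i, lam (i + r) := by
    rw [htr, hsum_r, hmin]
  refine ⟨⟨⟨P₀, ⟨_, hwu, hP₀app⟩, hval.symm⟩, ?_⟩, hval⟩
  rintro t ⟨P, ⟨w, hw, hPdef⟩, rfl⟩
  rw [aux_trace A hA lam u heig hlam hdec htc r w hw P hPdef]
  have hkf := aux_kyfan A hA lam u heig hlam hdec htc r w hw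
  linarith
end

section
/- Let A and Â be non-negative, self-adjoint, trace-class operators on a separable Hilbert space H, with eigenvalues λ₁ ≥ λ₂ ≥ ... and eigenvectors u_i (resp. λ̂_i, û_i). For r ∈ ℕ, let P̂_r = ∑_{i=1}^r û_i ⊗ û_i. Then Tr(A(I − P̂_r)) ≤ ∑_{i=r+1}^∞ λ_i + √(2r) ‖A − Â‖_{HS}. -/
/-!
Let `P` be the projection onto the first `r` eigenvectors of `A`; since `Tr(A P) = ∑_{i<r} λ_i`,
the claim is `Tr(A (P - P̂)) ≤ √(2r) ‖A - Â‖_HS`. Ky Fan's maximum principle gives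
`Tr(Â P) ≤ λ̂_1 + ⋯ + λ̂_r = Tr(Â P̂)`, hence `Tr(A (P - P̂)) ≤ Tr((A - Â)(P - P̂))`. By
Cauchy–Schwarz for the Hilbert–Schmidt inner product this is at most `‖P - P̂‖_HS ‖A - Â‖_HS`,
and `‖P - P̂‖_HS² = 2r - 2 Tr(P P̂) ≤ 2r`. All traces are sums over the eigenbasis of `A`.
-/

open RealInnerProductSpace

open Finset

theorem Summable.sq {ι : Type*} {f : ι → ℝ} (hf : Summable f) : Summable fun i => f i ^ 2 := by
  refine (summable_abs_iff.2 hf).of_norm_bounded_eventually ?_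
  filter_upwards [hf.tendsto_cofinite_zero.eventually (Metric.closedBall_mem_nhds 0 one_pos)]
    with i hi
  rw [dist_zero_right, Real.norm_eq_abs] at hi
  rw [Real.norm_eq_abs, abs_pow, pow_two]
  exact mul_le_of_le_one_left (abs_nonneg _) hi

theorem Summable.norm_sub_sq {ι E : Type*} [SeminormedAddCommGroup E] {f g : ι → E}
    (hf : Summable fun i => ‖f i‖ ^ 2) (hg : Summable fun i => ‖g i‖ ^ 2) :
    Summable fun i => ‖f i - g i‖ ^ 2 :=
  ((hf.add hg).mul_left 2).of_nonneg_of_le (fun _ => by positivity) fun i => by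
    nlinarith [norm_sub_le (f i) (g i), norm_nonneg (f i - g i), sq_nonneg (‖f i‖ - ‖g i‖)]

theorem Antitone.le_sum_range_of_hasSum_mul {μ d : ℕ → ℝ} {r : ℕ} {a : ℝ} (hμ : Antitone μ)
    (hd₀ : ∀ j, 0 ≤ d j) (hd₁ : ∀ j, d j ≤ 1) (hd : HasSum d r)
    (hμd : HasSum (fun j => μ j * d j) a) : a ≤ ∑ j ∈ range r, μ j := by
  set e : ℕ → ℝ := fun j => if j < r then 1 else 0
  have he_zero : ∀ j ∉ range r, e j = 0 := fun j hj => if_neg (by simpa using hj)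
  have he : HasSum e r := by
    have : HasSum e (∑ j ∈ range r, e j) := hasSum_sum_of_ne_finset_zero he_zero
    rwa [sum_congr rfl fun j hj => if_pos (mem_range.1 hj), sum_const, card_range,
      nsmul_one] at this
  have hμe : HasSum (fun j => μ j * e j) (∑ j ∈ range r, μ j) := by
    have : HasSum (fun j => μ j * e j) (∑ j ∈ range r, μ j * e j) :=
      hasSum_sum_of_ne_finset_zero fun j hj => by simp only [he_zero j hj, mul_zero]
    rwa [sum_congr rfl fun j hj => show μ j * e j = μ j by simp [e, mem_range.1 hj]] at this
  have hsum : HasSum (fun j => (μ j - μ r) * (d j - e j)) (a - ∑ j ∈ range r, μ j) := by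
    have h := (hμd.sub (hd.mul_left (μ r))).sub (hμe.sub (he.mul_left (μ r)))
    rw [show a - μ r * r - (∑ j ∈ range r, μ j - μ r * r) = a - ∑ j ∈ range r, μ j by ring] at h
    exact h.congr_fun fun j => by ring
  have hnonpos : ∀ j, (μ j - μ r) * (d j - e j) ≤ 0 := by
    intro j
    by_cases hj : j < r
    · simp only [e, if_pos hj]
      exact mul_nonpos_of_nonneg_of_nonpos (sub_nonneg.2 (hμ hj.le)) (sub_nonpos.2 (hd₁ j))
    · simp only [e, if_neg hj, sub_zero]
      exact mul_nonpos_of_nonpos_of_nonneg (sub_nonpos.2 (hμ (not_lt.1 hj))) (hd₀ j)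
  linarith [hasSum_le hnonpos hsum hasSum_zero]

section InnerProductSpace

variable {ι κ κ' H : Type*} [NormedAddCommGroup H] [InnerProductSpace ℝ H]

theorem tsum_inner_le_sqrt_mul_sqrt {f g : ι → H} (hf : Summable fun i => ‖f i‖ ^ 2)
    (hg : Summable fun i => ‖g i‖ ^ 2) :
    ∑' i, ⟪f i, g i⟫ ≤ √(∑' i, ‖f i‖ ^ 2) * √(∑' i, ‖g i‖ ^ 2) := by
  refine tsum_le_of_sum_le' (by positivity) fun s => ?_
  calc ∑ i ∈ s, ⟪f i, g i⟫ ≤ ∑ i ∈ s, ‖f i‖ * ‖g i‖ := sum_le_sum fun i _ => real_inner_le_norm _ _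
    _ ≤ √(∑ i ∈ s, ‖f i‖ ^ 2) * √(∑ i ∈ s, ‖g i‖ ^ 2) := Real.sum_mul_le_sqrt_mul_sqrt s _ _
    _ ≤ _ := by
      gcongr
      · exact hf.sum_le_tsum s fun i _ => by positivity
      · exact hg.sum_le_tsum s fun i _ => by positivity

theorem HilbertBasis.hasSum_inner_sq (b : HilbertBasis ι ℝ H) (x : H) :
    HasSum (fun i => ⟪b i, x⟫ ^ 2) (‖x‖ ^ 2) := by
  simpa [sq, real_inner_comm, real_inner_self_eq_norm_sq] using b.hasSum_inner_mul_inner x x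

noncomputable def spanProj (v : κ → H) (s : Finset κ) : H →L[ℝ] H :=
  ∑ j ∈ s, (innerSL ℝ (v j)).smulRight (v j)

theorem spanProj_apply (v : κ → H) (s : Finset κ) (x : H) :
    spanProj v s x = ∑ j ∈ s, ⟪v j, x⟫ • v j := by
  simp [spanProj]

theorem inner_spanProj_apply_left (v : κ → H) (s : Finset κ) (x y : H) :
    ⟪spanProj v s x, y⟫ = ∑ j ∈ s, ⟪v j, x⟫ * ⟪v j, y⟫ := by
  simp [spanProj_apply, sum_inner, real_inner_smul_left]

theorem inner_spanProj_apply_self_nonneg (v : κ → H) (s : Finset κ) (x : H) :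
    0 ≤ ⟪x, spanProj v s x⟫ := by
  rw [real_inner_comm, inner_spanProj_apply_left]
  exact sum_nonneg fun j _ => mul_self_nonneg _

theorem Orthonormal.spanProj_apply_of_mem {v : κ → H} (hv : Orthonormal ℝ v) {s : Finset κ}
    {j : κ} (hj : j ∈ s) : spanProj v s (v j) = v j := by
  classical
  simp [spanProj_apply, orthonormal_iff_ite.1 hv, hj]

variable [CompleteSpace H]

theorem IsSelfAdjoint.inner_apply_of_apply_eq_smul {T : H →L[ℝ] H} (hT : IsSelfAdjoint T)
    {v : H} {μ : ℝ} (hv : T v = μ • v) (x : H) : ⟪v, T x⟫ = μ * ⟪v, x⟫ := by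
  rw [← ContinuousLinearMap.adjoint_inner_left, hT.adjoint_eq, hv, real_inner_smul_left]

theorem HilbertBasis.hasSum_eigenvalue_mul_inner_sq (b : HilbertBasis ι ℝ H) {T : H →L[ℝ] H}
    (hT : IsSelfAdjoint T) {μ : ι → ℝ} (hb : ∀ i, T (b i) = μ i • b i) (x : H) :
    HasSum (fun i => μ i * ⟪b i, x⟫ ^ 2) ⟪x, T x⟫ := by
  refine (b.hasSum_inner_mul_inner x (T x)).congr_fun fun i => ?_
  rw [hT.inner_apply_of_apply_eq_smul (hb i), real_inner_comm x]
  ring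

theorem HilbertBasis.summable_norm_apply_sq_of_adjoint (u : HilbertBasis ι ℝ H)
    (v : HilbertBasis κ ℝ H) {T : H →L[ℝ] H}
    (hT : Summable fun j => ‖ContinuousLinearMap.adjoint T (v j)‖ ^ 2) :
    Summable fun i => ‖T (u i)‖ ^ 2 := by
  have hF : Summable fun p : κ × ι => ⟪u p.2, ContinuousLinearMap.adjoint T (v p.1)⟫ ^ 2 :=
    (summable_prod_of_nonneg fun _ => sq_nonneg _).2
      ⟨fun j => (u.hasSum_inner_sq (ContinuousLinearMap.adjoint T (v j))).summable,
        hT.congr fun j => (u.hasSum_inner_sq (ContinuousLinearMap.adjoint T (v j))).tsum_eq.symm⟩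
  refine hF.prod_symm.prod.congr fun i => ?_
  rw [← (v.hasSum_inner_sq (T (u i))).tsum_eq]
  exact tsum_congr fun j => by
    rw [Prod.swap_prod_mk, ContinuousLinearMap.adjoint_inner_right, real_inner_comm]

theorem HilbertBasis.summable_norm_apply_sq_of_summable_eigenvalues (u : HilbertBasis ι ℝ H)
    (v : HilbertBasis κ ℝ H) {T : H →L[ℝ] H} (hT : IsSelfAdjoint T) {μ : κ → ℝ}
    (hv : ∀ j, T (v j) = μ j • v j) (hμ : Summable μ) :
    Summable fun i => ‖T (u i)‖ ^ 2 := by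
  refine u.summable_norm_apply_sq_of_adjoint v (hμ.sq.congr fun j => ?_)
  rw [hT.adjoint_eq, hv, norm_smul, v.orthonormal.1, mul_one, Real.norm_eq_abs, sq_abs]

theorem HilbertBasis.sum_inner_apply_le_sum_range_of_antitone (v : HilbertBasis ℕ ℝ H)
    {T : H →L[ℝ] H} (hT : IsSelfAdjoint T) {μ : ℕ → ℝ} (hμ : Antitone μ)
    (hv : ∀ j, T (v j) = μ j • v j) {w : κ → H} (hw : Orthonormal ℝ w) (s : Finset κ) :
    ∑ i ∈ s, ⟪w i, T (w i)⟫ ≤ ∑ j ∈ range #s, μ j := by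
  set d : ℕ → ℝ := fun j => ∑ i ∈ s, ⟪v j, w i⟫ ^ 2
  have hd₁ : ∀ j, d j ≤ 1 := fun j => by
    simpa [d, real_inner_comm, v.orthonormal.1 j] using hw.sum_inner_products_le (x := v j) (s := s)
  have hd : HasSum d #s := by
    simpa [hw.1] using hasSum_sum fun i (_ : i ∈ s) => v.hasSum_inner_sq (w i)
  have hμd : HasSum (fun j => μ j * d j) (∑ i ∈ s, ⟪w i, T (w i)⟫) := by
    simpa [d, mul_sum] using
      hasSum_sum fun i (_ : i ∈ s) => v.hasSum_eigenvalue_mul_inner_sq hT hv (w i)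
  exact hμ.le_sum_range_of_hasSum_mul (fun j => sum_nonneg fun i _ => sq_nonneg _) hd₁ hd hμd

theorem HilbertBasis.hasSum_inner_spanProj_apply (u : HilbertBasis ι ℝ H) (v : κ → H)
    (s : Finset κ) (T : H →L[ℝ] H) :
    HasSum (fun i => ⟪spanProj v s (u i), T (u i)⟫) (∑ j ∈ s, ⟪v j, T (v j)⟫) := by
  simp_rw [inner_spanProj_apply_left]
  refine hasSum_sum fun j _ => ?_
  have h := u.hasSum_inner_mul_inner (v j) (ContinuousLinearMap.adjoint T (v j))
  simpa only [ContinuousLinearMap.adjoint_inner_right, real_inner_comm (v j)] using h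

theorem HilbertBasis.hasSum_norm_spanProj_apply_sq (u : HilbertBasis ι ℝ H) {v : κ → H}
    (hv : Orthonormal ℝ v) (s : Finset κ) :
    HasSum (fun i => ‖spanProj v s (u i)‖ ^ 2) #s := by
  have h := u.hasSum_inner_spanProj_apply v s (spanProj v s)
  rw [sum_congr rfl fun j hj => by rw [hv.spanProj_apply_of_mem hj, real_inner_self_eq_norm_sq,
    hv.1 j, one_pow]] at h
  simpa [real_inner_self_eq_norm_sq] using h

theorem HilbertBasis.hasSum_norm_spanProj_sub_spanProj_apply_sq (u : HilbertBasis ι ℝ H)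
    {v : κ → H} {w : κ' → H} (hv : Orthonormal ℝ v) (hw : Orthonormal ℝ w) (s : Finset κ)
    (t : Finset κ') :
    HasSum (fun i => ‖(spanProj v s - spanProj w t) (u i)‖ ^ 2)
      (#s - 2 * ∑ j ∈ s, ⟪v j, spanProj w t (v j)⟫ + #t) := by
  refine (((u.hasSum_norm_spanProj_apply_sq hv s).sub
    ((u.hasSum_inner_spanProj_apply v s (spanProj w t)).mul_left 2)).add
    (u.hasSum_norm_spanProj_apply_sq hw t)).congr_fun fun i => ?_
  rw [sub_apply, norm_sub_sq_real]

theorem HilbertBasis.sum_inner_apply_sub_sum_inner_apply_le (u : HilbertBasis ι ℝ H)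
    {w : κ → H} (hw : Orthonormal ℝ w) (s : Finset ι) (t : Finset κ) {E : H →L[ℝ] H}
    (hE : Summable fun i => ‖E (u i)‖ ^ 2) :
    ∑ i ∈ s, ⟪u i, E (u i)⟫ - ∑ j ∈ t, ⟪w j, E (w j)⟫
      ≤ √(#s + #t) * √(∑' i, ‖E (u i)‖ ^ 2) := by
  set D := spanProj u s - spanProj w t
  have hD := u.hasSum_norm_spanProj_sub_spanProj_apply_sq u.orthonormal hw s t
  have hDE : HasSum (fun i => ⟪D (u i), E (u i)⟫)
      (∑ i ∈ s, ⟪u i, E (u i)⟫ - ∑ j ∈ t, ⟪w j, E (w j)⟫) :=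
    ((u.hasSum_inner_spanProj_apply u s E).sub (u.hasSum_inner_spanProj_apply w t E)).congr_fun
      fun i => by rw [sub_apply, inner_sub_left]
  have hD_le : ∑' i, ‖D (u i)‖ ^ 2 ≤ #s + #t := by
    rw [hD.tsum_eq]
    linarith [sum_nonneg fun j (_ : j ∈ s) => inner_spanProj_apply_self_nonneg w t (u j)]
  calc _ = ∑' i, ⟪D (u i), E (u i)⟫ := hDE.tsum_eq.symm
    _ ≤ √(∑' i, ‖D (u i)‖ ^ 2) * √(∑' i, ‖E (u i)‖ ^ 2) :=
      tsum_inner_le_sqrt_mul_sqrt hD.summable hE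
    _ ≤ _ := by gcongr

end InnerProductSpace

theorem stmt_2_general {H : Type*} [NormedAddCommGroup H] [InnerProductSpace ℝ H] [CompleteSpace H]
    (A Ahat : H →L[ℝ] H) (hA : IsSelfAdjoint A) (hAhat : IsSelfAdjoint Ahat)
    (lam lamh : ℕ → ℝ) (u uh : HilbertBasis ℕ ℝ H)
    (heigA : ∀ i, A (u i) = lam i • u i) (heigAh : ∀ i, Ahat (uh i) = lamh i • uh i)
    (hdecAh : Antitone lamh)
    (htcA : Summable lam) (htcAh : Summable lamh)
    (r : ℕ) (Phat : H →L[ℝ] H)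
    (hPhat : Phat = ∑ i : Fin r, (innerSL ℝ (uh (i : ℕ))).smulRight (uh (i : ℕ))) :
    (∑' i, ⟪(A ∘L ((1 : H →L[ℝ] H) - Phat)) (u i), u i⟫)
      ≤ (∑' i, lam (i + r))
        + Real.sqrt (2 * r) * Real.sqrt (∑' i, ‖(A - Ahat) (u i)‖ ^ 2) := by
  rw [Fin.sum_univ_eq_sum_range (fun j => (innerSL ℝ (uh j)).smulRight (uh j))] at hPhat
  change Phat = spanProj uh (range r) at hPhat
  have hlam : ∀ i, ⟪u i, A (u i)⟫ = lam i := fun i => by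
    rw [hA.inner_apply_of_apply_eq_smul (heigA i), real_inner_self_eq_norm_sq, u.orthonormal.1 i]
    ring
  have hlamh : ∀ j, ⟪uh j, Ahat (uh j)⟫ = lamh j := fun j => by
    rw [hAhat.inner_apply_of_apply_eq_smul (heigAh j), real_inner_self_eq_norm_sq,
      uh.orthonormal.1 j]
    ring
  have htrace : HasSum (fun i => ⟪(A ∘L (1 - Phat)) (u i), u i⟫)
      (∑' i, lam i - ∑ j ∈ range r, ⟪uh j, A (uh j)⟫) := by
    refine (htcA.hasSum.sub (u.hasSum_inner_spanProj_apply uh (range r) A)).congr_fun fun i => ?_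
    rw [← hlam, hPhat, ← inner_sub_left, ← ContinuousLinearMap.adjoint_inner_left, hA.adjoint_eq]
    rfl
  have hKyFan : ∑ j ∈ range r, ⟪u j, Ahat (u j)⟫ ≤ ∑ j ∈ range r, lamh j := by
    simpa using uh.sum_inner_apply_le_sum_range_of_antitone hAhat hdecAh heigAh u.orthonormal
      (range r)
  have hHS : Summable fun i => ‖(A - Ahat) (u i)‖ ^ 2 :=
    (u.summable_norm_apply_sq_of_summable_eigenvalues u hA heigA htcA).norm_sub_sq
      (u.summable_norm_apply_sq_of_summable_eigenvalues uh hAhat heigAh htcAh)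
  have hpert := u.sum_inner_apply_sub_sum_inner_apply_le uh.orthonormal (range r) (range r) hHS
  set N := ∑' i, ‖(A - Ahat) (u i)‖ ^ 2
  simp only [card_range, ← two_mul, sub_apply, inner_sub_right, sum_sub_distrib, hlam, hlamh]
    at hpert
  rw [htrace.tsum_eq, ← htcA.sum_add_tsum_nat_add r]
  linarith

/-- Let `A` and `Ahat` be non-negative, self-adjoint, trace-class operators on a separable
Hilbert space `H`, with Hilbert bases `u`, `uh` of eigenvectors and decreasing summable
eigenvalue sequences `lam`, `lamh`.  For `Phat` the orthogonal projection onto the span of the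
top `r` eigenvectors of `Ahat`, the trace `Tr(A (I - Phat))` (computed in the eigenbasis of `A`)
is bounded by the tail sum `∑_{i≥r} lam i` plus `√(2r)` times the Hilbert–Schmidt norm of
`A - Ahat` (computed in the basis `u`). -/
theorem stmt_2 {H : Type*} [NormedAddCommGroup H] [InnerProductSpace ℝ H] [CompleteSpace H]
    (A Ahat : H →L[ℝ] H) (hA : IsSelfAdjoint A) (hAhat : IsSelfAdjoint Ahat)
    (hposA : ∀ x : H, 0 ≤ ⟪A x, x⟫) (hposAhat : ∀ x : H, 0 ≤ ⟪Ahat x, x⟫)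
    (lam lamh : ℕ → ℝ) (u uh : HilbertBasis ℕ ℝ H)
    (heigA : ∀ i, A (u i) = lam i • u i) (heigAh : ∀ i, Ahat (uh i) = lamh i • uh i)
    (hdecA : Antitone lam) (hdecAh : Antitone lamh)
    (htcA : Summable lam) (htcAh : Summable lamh)
    (r : ℕ) (Phat : H →L[ℝ] H)
    (hPhat : Phat = ∑ i : Fin r, (innerSL ℝ (uh (i : ℕ))).smulRight (uh (i : ℕ))) :
    (∑' i, ⟪(A ∘L ((1 : H →L[ℝ] H) - Phat)) (u i), u i⟫)
      ≤ (∑' i, lam (i + r))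
        + Real.sqrt (2 * r) * Real.sqrt (∑' i, ‖(A - Ahat) (u i)‖ ^ 2) :=
  stmt_2_general A Ahat hA hAhat lam lamh u uh heigA heigAh hdecAh htcA htcAh r Phat hPhat
end

section
/- Let P and P̂ be two orthogonal projections of equal rank r on a separable Hilbert space H, with P the projection onto the top r eigenvectors of a non-negative self-adjoint trace-class operator A whose eigenvalues satisfy λ_r > λ_{r+1}, and P̂ the analogous projection for another non-negative self-adjoint trace-class operator Â that maximizes Tr(Â P̂) over rank-r projections. Then ‖P − P̂‖²_{HS} ≤ 2 Tr(A(P − P̂)) / (λ_r − λ_{r+1}). -/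
open RealInnerProductSpace Finset

/-! With `c i = ‖P̂ uᵢ‖²` we have `0 ≤ c i ≤ 1` (Bessel) and `∑ c i = r` (Parseval), and in the
eigenbasis `‖(P - P̂) uᵢ‖² = 1 - c i` for `i < r`, `= c i` otherwise, while
`⟪A (P - P̂) uᵢ, uᵢ⟫ = λᵢ (𝟙[i < r] - c i)`. Both series are thus controlled by the mass
`T = ∑_{i<r} (1 - c i) = ∑_{i≥r} c i` that `P̂` moves out of the top eigenspace: the first equals
`2T`, and by monotonicity of `λ` the second is at least `λ_{r-1} T - λ_r T`. -/

theorem tsum_ite_lt_eq_sum_add_tsum {M : Type*} [AddCommMonoid M] [TopologicalSpace M]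
    [T2Space M] [ContinuousAdd M] {f g : ℕ → M} {r : ℕ} (hg : Summable fun i => g (i + r)) :
    ∑' i, (if i < r then f i else g i) = ∑ i ∈ range r, f i + ∑' i, g (i + r) := by
  rw [← Summable.sum_add_tsum_nat_add' (k := r) (by simpa using hg)]
  simp +contextual [sum_congr rfl, mem_range]

theorem gap_mul_tsum_le {lam c : ℕ → ℝ} {r : ℕ} (hlam : Antitone lam)
    (hc0 : ∀ i, 0 ≤ c i) (hc1 : ∀ i, c i ≤ 1) (hc : HasSum c r)
    (hlc : Summable fun i => lam i * c i) :
    (lam (r - 1) - lam r) * ∑' i, (if i < r then 1 - c i else c i)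
      ≤ 2 * ∑' i, lam i * ((if i < r then 1 else 0) - c i) := by
  set T := ∑ i ∈ range r, (1 - c i)
  have hc_tail : Summable fun i => c (i + r) := (summable_nat_add_iff r).2 hc.summable
  have hlc_tail : Summable fun i => lam (i + r) * c (i + r) := (summable_nat_add_iff r).2 hlc
  have htail : ∑' i, c (i + r) = T := by
    have := hc.summable.sum_add_tsum_nat_add r
    rw [hc.tsum_eq] at this
    simp only [T, sum_sub_distrib, sum_const, card_range, nsmul_eq_mul, mul_one]
    linarith
  have hlhs : ∑' i, (if i < r then 1 - c i else c i) = 2 * T := by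
    rw [tsum_ite_lt_eq_sum_add_tsum hc_tail, htail]
    ring
  have hrhs : ∑' i, lam i * ((if i < r then 1 else 0) - c i)
      = ∑ i ∈ range r, lam i * (1 - c i) - ∑' i, lam (i + r) * c (i + r) := by
    have : ∀ i, lam i * ((if i < r then 1 else 0) - c i)
        = if i < r then lam i * (1 - c i) else -(lam i * c i) := fun i => by split_ifs <;> ring
    rw [tsum_congr this, tsum_ite_lt_eq_sum_add_tsum (g := fun i => -(lam i * c i)) hlc_tail.neg,
      tsum_neg, sub_eq_add_neg]
  have hhead : lam (r - 1) * T ≤ ∑ i ∈ range r, lam i * (1 - c i) := by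
    rw [mul_sum]
    exact sum_le_sum fun i hi =>
      mul_le_mul_of_nonneg_right (hlam (by have := mem_range.1 hi; omega)) (sub_nonneg.2 (hc1 i))
  have hrest : ∑' i, lam (i + r) * c (i + r) ≤ lam r * T := by
    rw [← htail, ← hc_tail.tsum_mul_left]
    exact hlc_tail.tsum_le_tsum (fun i => mul_le_mul_of_nonneg_right (hlam (by omega)) (hc0 _))
      (hc_tail.mul_left _)
  rw [hlhs, hrhs]
  linarith

section FiniteRankProjection

variable {H : Type*} [NormedAddCommGroup H] [InnerProductSpace ℝ H] {κ : Type*} [Fintype κ]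

theorem sum_smulRight_innerSL_apply (w : κ → H) (x : H) :
    (∑ j, (innerSL ℝ (w j)).smulRight (w j)) x = ∑ j, ⟪w j, x⟫ • w j := by
  simp

theorem inner_sum_inner_smul_self (w : κ → H) (x : H) :
    ⟪∑ j, ⟪w j, x⟫ • w j, x⟫ = ∑ j, ⟪w j, x⟫ ^ 2 := by
  simp [sum_inner, real_inner_smul_left, sq]

theorem Orthonormal.norm_sum_inner_smul_sq {w : κ → H} (hw : Orthonormal ℝ w) (x : H) :
    ‖∑ j, ⟪w j, x⟫ • w j‖ ^ 2 = ∑ j, ⟪w j, x⟫ ^ 2 := by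
  rw [← real_inner_self_eq_norm_sq, hw.inner_sum]
  simp [sq]

theorem Orthonormal.norm_sub_sum_inner_smul_sq {w : κ → H} (hw : Orthonormal ℝ w) (x : H) :
    ‖x - ∑ j, ⟪w j, x⟫ • w j‖ ^ 2 = ‖x‖ ^ 2 - ∑ j, ⟪w j, x⟫ ^ 2 := by
  rw [norm_sub_sq_real, real_inner_comm, inner_sum_inner_smul_self, hw.norm_sum_inner_smul_sq]
  ring

theorem Orthonormal.sum_inner_sq_le {w : κ → H} (hw : Orthonormal ℝ w) (x : H) :
    ∑ j, ⟪w j, x⟫ ^ 2 ≤ ‖x‖ ^ 2 := by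
  simpa [sq_abs] using hw.sum_inner_products_le (s := univ) (x := x)

theorem HilbertBasis.hasSum_sum_inner_sq {ι : Type*} (u : HilbertBasis ι ℝ H) {w : κ → H}
    (hw : Orthonormal ℝ w) : HasSum (fun i => ∑ j, ⟪w j, u i⟫ ^ 2) (Fintype.card κ) := by
  have hone : ∀ j, HasSum (fun i => ⟪w j, u i⟫ ^ 2) 1 := fun j => by
    simpa [real_inner_comm, sq, real_inner_self_eq_norm_sq, hw.1 j]
      using u.hasSum_inner_mul_inner (w j) (w j)
  convert hasSum_sum fun j _ => hone j
  simp

theorem HilbertBasis.sum_inner_smul_eq_ite (u : HilbertBasis ℕ ℝ H) (r i : ℕ) :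
    ∑ j : Fin r, ⟪u j, u i⟫ • u j = if i < r then u i else 0 := by
  rw [Fin.sum_univ_eq_sum_range (fun j => ⟪u j, u i⟫ • u j)]
  simp [orthonormal_iff_ite.1 u.orthonormal, ite_smul, sum_ite_eq']

end FiniteRankProjection

theorem stmt_4_general {H : Type*} [NormedAddCommGroup H] [InnerProductSpace ℝ H] [CompleteSpace H]
    (A : H →L[ℝ] H) (hA : IsSelfAdjoint A)
    (hposA : ∀ x : H, 0 ≤ ⟪A x, x⟫)
    (lam : ℕ → ℝ) (u uh : HilbertBasis ℕ ℝ H)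
    (heigA : ∀ i, A (u i) = lam i • u i)
    (hdecA : Antitone lam)
    (htcA : Summable lam)
    (r : ℕ) (hgap : lam r < lam (r - 1))
    (P Phat : H →L[ℝ] H)
    (hP : P = ∑ i : Fin r, (innerSL ℝ (u (i : ℕ))).smulRight (u (i : ℕ)))
    (hPhat : Phat = ∑ i : Fin r, (innerSL ℝ (uh (i : ℕ))).smulRight (uh (i : ℕ))) :
    (∑' i, ‖(P - Phat) (u i)‖ ^ 2)
      ≤ 2 * (∑' i, ⟪(A ∘L (P - Phat)) (u i), u i⟫) / (lam (r - 1) - lam r) := by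
  have hw : Orthonormal ℝ fun j : Fin r => uh j := uh.orthonormal.comp _ Fin.val_injective
  set c : ℕ → ℝ := fun i => ∑ j : Fin r, ⟪uh j, u i⟫ ^ 2
  have hdiff : ∀ i, (P - Phat) (u i)
      = (if i < r then u i else 0) - ∑ j : Fin r, ⟪uh j, u i⟫ • uh j := fun i => by
    rw [sub_apply, hP, hPhat, sum_smulRight_innerSL_apply,
      sum_smulRight_innerSL_apply, u.sum_inner_smul_eq_ite]
  have hnorm : ∀ i, ‖(P - Phat) (u i)‖ ^ 2 = if i < r then 1 - c i else c i := fun i => by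
    rw [hdiff]
    split_ifs
    · rw [hw.norm_sub_sum_inner_smul_sq, u.orthonormal.1 i, one_pow]
    · rw [zero_sub, norm_neg, hw.norm_sum_inner_smul_sq]
  have htrace : ∀ i, ⟪(A ∘L (P - Phat)) (u i), u i⟫
      = lam i * ((if i < r then 1 else 0) - c i) := fun i => by
    rw [ContinuousLinearMap.comp_apply, show ∀ x y, ⟪A x, y⟫ = ⟪x, A y⟫ from hA.isSymmetric, heigA, real_inner_smul_right, hdiff,
      inner_sub_left, inner_sum_inner_smul_self]
    split_ifs <;> simp [c, u.orthonormal.1 i]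
  have hlam0 : ∀ i, 0 ≤ lam i := fun i => by
    simpa [heigA, real_inner_smul_left, u.orthonormal.1 i] using hposA (u i)
  have hc0 : ∀ i, 0 ≤ c i := fun i => by positivity
  have hc1 : ∀ i, c i ≤ 1 := fun i => by simpa [u.orthonormal.1 i] using hw.sum_inner_sq_le (u i)
  have hlc : Summable fun i => lam i * c i :=
    htcA.of_nonneg_of_le (fun i => mul_nonneg (hlam0 i) (hc0 i))
      fun i => mul_le_of_le_one_right (hlam0 i) (hc1 i)
  rw [tsum_congr hnorm, tsum_congr htrace, le_div_iff₀ (sub_pos.2 hgap), mul_comm]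
  exact gap_mul_tsum_le hdecA hc0 hc1 (by simpa using u.hasSum_sum_inner_sq hw) hlc

/-- Let `A`, `Ahat` be non-negative, self-adjoint, trace-class operators on a separable Hilbert
space `H`, with Hilbert bases `u`, `uh` of eigenvectors, decreasing summable eigenvalues
`lam`, `lamh`, and spectral gap `lam (r-1) > lam r` of `A` (1-based: `λ_r > λ_{r+1}`).
Let `P` be the projection onto the top `r` eigenvectors of `A` and `Phat` the analogous
projection for `Ahat`, which maximizes `Tr(Ahat Q)` over rank-`r` orthogonal projections `Q`.
Then `‖P - Phat‖²_HS ≤ 2 Tr(A (P - Phat)) / (λ_r - λ_{r+1})`, with the Hilbert–Schmidt norm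
and traces computed in the eigenbasis `u` of `A`. -/
theorem stmt_4 {H : Type*} [NormedAddCommGroup H] [InnerProductSpace ℝ H] [CompleteSpace H]
    (A Ahat : H →L[ℝ] H) (hA : IsSelfAdjoint A) (hAhat : IsSelfAdjoint Ahat)
    (hposA : ∀ x : H, 0 ≤ ⟪A x, x⟫) (hposAhat : ∀ x : H, 0 ≤ ⟪Ahat x, x⟫)
    (lam lamh : ℕ → ℝ) (u uh : HilbertBasis ℕ ℝ H)
    (heigA : ∀ i, A (u i) = lam i • u i) (heigAh : ∀ i, Ahat (uh i) = lamh i • uh i)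
    (hdecA : Antitone lam) (hdecAh : Antitone lamh)
    (htcA : Summable lam) (htcAh : Summable lamh)
    (r : ℕ) (hr : 0 < r) (hgap : lam r < lam (r - 1))
    (P Phat : H →L[ℝ] H)
    (hP : P = ∑ i : Fin r, (innerSL ℝ (u (i : ℕ))).smulRight (u (i : ℕ)))
    (hPhat : Phat = ∑ i : Fin r, (innerSL ℝ (uh (i : ℕ))).smulRight (uh (i : ℕ)))
    (hmax : ∀ Q : H →L[ℝ] H,
      (∃ w : Fin r → H, Orthonormal ℝ w ∧ ∀ x, Q x = ∑ i, ⟪w i, x⟫ • w i) →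
      (∑' i, ⟪(Ahat ∘L Q) (u i), u i⟫) ≤ ∑' i, ⟪(Ahat ∘L Phat) (u i), u i⟫) :
    (∑' i, ‖(P - Phat) (u i)‖ ^ 2)
      ≤ 2 * (∑' i, ⟪(A ∘L (P - Phat)) (u i), u i⟫) / (lam (r - 1) - lam r) :=
  stmt_4_general A hA hposA lam u uh heigA hdecA htcA r hgap P Phat hP hPhat
end

section
/- Let z be a random variable with values in a separable Hilbert space H with distribution ν, mean z̄, and finite fourth moment E[‖z‖⁴] < ∞. Given N i.i.d. samples z₁,...,z_N ∼ ν, the sample mean ẑ = (1/N) ∑_{k=1}^N z_k satisfies E[‖ẑ − z̄‖⁴_H] ≤ (E[‖z − z̄‖⁴_H] + 3 E[‖z − z̄‖²_H]²) / N². -/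
/-!
Centre the samples: `Y k = z k - zbar` are independent, mean zero and in `L⁴`, and the sample
mean minus `zbar` is `N⁻¹ • ∑ k, Y k`. For independent centred `X`, `Y`, expanding
`‖X + Y‖² = ‖X‖² + 2⟪X, Y⟫ + ‖Y‖²` and squaring, Cauchy–Schwarz bounds `⟪X, Y⟫²` by
`‖X‖² ‖Y‖²`, while the cubic terms `‖X‖² ⟪X, Y⟫` and `‖Y‖² ⟪Y, X⟫` have mean zero by
independence. Hence `E‖X + Y‖⁴ ≤ E‖X‖⁴ + 6 E‖X‖² E‖Y‖² + E‖Y‖⁴`, and also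
`E‖X + Y‖² = E‖X‖² + E‖Y‖²`. Adding the samples one at a time gives
`E‖∑ Y k‖⁴ ≤ N m₄ + 3 N² m₂²` with `mₚ = E‖Y k‖ᵖ`, and dividing by `N⁴` gives the bound.
-/

open MeasureTheory ProbabilityTheory
open scoped RealInnerProductSpace

theorem Finset.inv_card_smul_sum_sub {ι E : Type*} [AddCommGroup E] [Module ℝ E]
    {s : Finset ι} (hs : s.Nonempty) (x : ι → E) (c : E) :
    (s.card : ℝ)⁻¹ • ∑ i ∈ s, x i - c = (s.card : ℝ)⁻¹ • ∑ i ∈ s, (x i - c) := by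
  have hcard : (s.card : ℝ) ≠ 0 := by exact_mod_cast hs.card_pos.ne'
  rw [Finset.sum_sub_distrib, Finset.sum_const, ← Nat.cast_smul_eq_nsmul ℝ, smul_sub, smul_smul,
    inv_mul_cancel₀ hcard, one_smul]

theorem norm_add_pow_four_le {H : Type*} [NormedAddCommGroup H] [InnerProductSpace ℝ H]
    (x y : H) :
    ‖x + y‖ ^ 4 ≤ ‖x‖ ^ 4 + 6 * (‖x‖ ^ 2 * ‖y‖ ^ 2) + ‖y‖ ^ 4
      + 4 * ⟪‖x‖ ^ 2 • x, y⟫ + 4 * ⟪‖y‖ ^ 2 • y, x⟫ := by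
  have hsq : ‖x + y‖ ^ 2 = ‖x‖ ^ 2 + 2 * ⟪x, y⟫ + ‖y‖ ^ 2 := norm_add_sq_real x y
  have hcs : ⟪x, y⟫ ^ 2 ≤ ‖x‖ ^ 2 * ‖y‖ ^ 2 := by
    rw [← mul_pow, sq_le_sq, abs_mul, abs_norm, abs_norm]
    exact abs_real_inner_le_norm x y
  rw [real_inner_smul_left, real_inner_smul_left, real_inner_comm x y,
    show ‖x + y‖ ^ 4 = (‖x + y‖ ^ 2) ^ 2 by ring, hsq]
  nlinarith

theorem MeasureTheory.MemLp.integrable_norm_sq_smul {Ω E : Type*} [MeasurableSpace Ω]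
    {μ : Measure Ω} [IsFiniteMeasure μ] [NormedAddCommGroup E] [NormedSpace ℝ E] {Z : Ω → E}
    (hZ : MemLp Z 3 μ) :
    Integrable (fun ω ↦ ‖Z ω‖ ^ 2 • Z ω) μ :=
  hZ.integrable_norm_pow'.mono' (hZ.1.norm.pow 2 |>.smul hZ.1) (.of_forall fun ω ↦ by
    rw [norm_smul, norm_pow, norm_norm, ← pow_succ])

namespace ProbabilityTheory

variable {Ω : Type*} [MeasurableSpace Ω] {μ : Measure Ω}
  {H : Type*} [NormedAddCommGroup H] [InnerProductSpace ℝ H] [MeasurableSpace H] [BorelSpace H]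

theorem iIndepFun.indepFun_fun_finsetSum_of_notMem {ι β : Type*} [MeasurableSpace β]
    [AddCommMonoid β] [MeasurableAdd₂ β] {f : ι → Ω → β} (hf : iIndepFun f μ)
    (hmeas : ∀ i, Measurable (f i)) {s : Finset ι} {k : ι} (hk : k ∉ s) :
    IndepFun (fun ω ↦ ∑ i ∈ s, f i ω) (f k) μ := by
  simpa only [Finset.sum_fn] using hf.indepFun_finsetSum_of_notMem hmeas hk

theorem IndepFun.integrable_inner {X Y : Ω → H} (hXY : IndepFun X Y μ) (hX : Integrable X μ)
    (hY : Integrable Y μ) : Integrable (fun ω ↦ ⟪X ω, Y ω⟫) μ :=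
  hXY.integrable_bilin hX hY (innerSL ℝ)

theorem IndepFun.norm_sq_smul_left {X Y : Ω → H} (hXY : IndepFun X Y μ) :
    IndepFun (fun ω ↦ ‖X ω‖ ^ 2 • X ω) Y μ :=
  hXY.comp (φ := fun x ↦ ‖x‖ ^ 2 • x) (by fun_prop) measurable_id

theorem IndepFun.integrable_inner_norm_sq_smul [IsFiniteMeasure μ] {X Y : Ω → H}
    (hXY : IndepFun X Y μ) (hX : MemLp X 3 μ) (hY : Integrable Y μ) :
    Integrable (fun ω ↦ ⟪‖X ω‖ ^ 2 • X ω, Y ω⟫) μ :=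
  hXY.norm_sq_smul_left.integrable_inner hX.integrable_norm_sq_smul hY

variable [CompleteSpace H]

theorem IndepFun.integral_inner {X Y : Ω → H} (hXY : IndepFun X Y μ) (hX : Integrable X μ)
    (hY : Integrable Y μ) : ∫ ω, ⟪X ω, Y ω⟫ ∂μ = ⟪∫ ω, X ω ∂μ, ∫ ω, Y ω ∂μ⟫ :=
  hXY.integral_bilin hX hY (innerSL ℝ)

variable [IsFiniteMeasure μ]

theorem IndepFun.integral_norm_add_sq {X Y : Ω → H} (hXY : IndepFun X Y μ)
    (hX : MemLp X 2 μ) (hY : MemLp Y 2 μ) (hX0 : ∫ ω, X ω ∂μ = 0) :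
    ∫ ω, ‖X ω + Y ω‖ ^ 2 ∂μ = ∫ ω, ‖X ω‖ ^ 2 ∂μ + ∫ ω, ‖Y ω‖ ^ 2 ∂μ := by
  have hX1 := hX.integrable one_le_two
  have hY1 := hY.integrable one_le_two
  have hcross : ∫ ω, ⟪X ω, Y ω⟫ ∂μ = 0 := by
    rw [hXY.integral_inner hX1 hY1, hX0, inner_zero_left]
  have hsq := hX.integrable_norm_pow'
  have hcross_int := (hXY.integrable_inner hX1 hY1).const_mul 2
  simp_rw [norm_add_sq_real]
  rw [integral_add (hsq.fun_add hcross_int) hY.integrable_norm_pow', integral_add hsq hcross_int,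
    integral_const_mul, hcross, mul_zero, add_zero]

theorem IndepFun.integral_inner_norm_sq_smul_eq_zero {X Y : Ω → H} (hXY : IndepFun X Y μ)
    (hX : MemLp X 3 μ) (hY : Integrable Y μ) (hY0 : ∫ ω, Y ω ∂μ = 0) :
    ∫ ω, ⟪‖X ω‖ ^ 2 • X ω, Y ω⟫ ∂μ = 0 := by
  rw [hXY.norm_sq_smul_left.integral_inner hX.integrable_norm_sq_smul hY, hY0, inner_zero_right]

theorem IndepFun.integral_norm_add_pow_four_le {X Y : Ω → H} (hXY : IndepFun X Y μ)
    (hX : MemLp X 4 μ) (hY : MemLp Y 4 μ) (hX0 : ∫ ω, X ω ∂μ = 0) (hY0 : ∫ ω, Y ω ∂μ = 0) :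
    ∫ ω, ‖X ω + Y ω‖ ^ 4 ∂μ ≤ ∫ ω, ‖X ω‖ ^ 4 ∂μ
      + 6 * ((∫ ω, ‖X ω‖ ^ 2 ∂μ) * ∫ ω, ‖Y ω‖ ^ 2 ∂μ) + ∫ ω, ‖Y ω‖ ^ 4 ∂μ := by
  have hX1 := hX.integrable (by norm_num)
  have hY1 := hY.integrable (by norm_num)
  have hX2 : MemLp X 2 μ := hX.mono_exponent (by norm_num)
  have hY2 : MemLp Y 2 μ := hY.mono_exponent (by norm_num)
  have hX3 : MemLp X 3 μ := hX.mono_exponent (by norm_num)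
  have hY3 : MemLp Y 3 μ := hY.mono_exponent (by norm_num)
  have hsq_indep : IndepFun (fun ω ↦ ‖X ω‖ ^ 2) (fun ω ↦ ‖Y ω‖ ^ 2) μ :=
    hXY.comp (φ := fun x ↦ ‖x‖ ^ 2) (ψ := fun x ↦ ‖x‖ ^ 2) (by fun_prop) (by fun_prop)
  have h40 : Integrable (fun ω ↦ ‖X ω‖ ^ 4) μ := hX.integrable_norm_pow'
  have h04 : Integrable (fun ω ↦ ‖Y ω‖ ^ 4) μ := hY.integrable_norm_pow'
  have h22 : Integrable (fun ω ↦ 6 * (‖X ω‖ ^ 2 * ‖Y ω‖ ^ 2)) μ :=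
    (hsq_indep.integrable_mul hX2.integrable_norm_pow' hY2.integrable_norm_pow').const_mul 6
  have h31 := (hXY.integrable_inner_norm_sq_smul hX3 hY1).const_mul 4
  have h13 := (hXY.symm.integrable_inner_norm_sq_smul hY3 hX1).const_mul 4
  calc ∫ ω, ‖X ω + Y ω‖ ^ 4 ∂μ
      ≤ ∫ ω, ‖X ω‖ ^ 4 + 6 * (‖X ω‖ ^ 2 * ‖Y ω‖ ^ 2) + ‖Y ω‖ ^ 4
          + 4 * ⟪‖X ω‖ ^ 2 • X ω, Y ω⟫ + 4 * ⟪‖Y ω‖ ^ 2 • Y ω, X ω⟫ ∂μ :=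
        integral_mono_of_nonneg (.of_forall fun ω ↦ by positivity)
          ((((h40.fun_add h22).fun_add h04).fun_add h31).fun_add h13)
          (.of_forall fun ω ↦ norm_add_pow_four_le (X ω) (Y ω))
    _ = _ := by
      rw [integral_add (((h40.fun_add h22).fun_add h04).fun_add h31) h13,
        integral_add ((h40.fun_add h22).fun_add h04) h31, integral_add (h40.fun_add h22) h04,
        integral_add h40 h22, integral_const_mul, integral_const_mul, integral_const_mul,
        hXY.integral_inner_norm_sq_smul_eq_zero hX3 hY1 hY0,
        hXY.symm.integral_inner_norm_sq_smul_eq_zero hY3 hX1 hX0,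
        hsq_indep.integral_fun_mul_eq_mul_integral (by fun_prop) (by fun_prop)]
      ring

variable [SecondCountableTopology H] {ι : Type*} {Y : ι → Ω → H}

theorem iIndepFun.integral_norm_sum_sq (hY : iIndepFun Y μ) (hmeas : ∀ i, Measurable (Y i))
    (hL2 : ∀ i, MemLp (Y i) 2 μ) (h0 : ∀ i, ∫ ω, Y i ω ∂μ = 0) (s : Finset ι) :
    ∫ ω, ‖∑ i ∈ s, Y i ω‖ ^ 2 ∂μ = ∑ i ∈ s, ∫ ω, ‖Y i ω‖ ^ 2 ∂μ := by
  classical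
  induction s using Finset.induction_on with
  | empty => simp
  | insert k s hk ih =>
    have hindep := (hY.indepFun_fun_finsetSum_of_notMem hmeas hk).symm
    simp_rw [Finset.sum_insert hk]
    rw [hindep.integral_norm_add_sq (hL2 k) (memLp_finsetSum s fun i _ ↦ hL2 i) (h0 k), ih]

theorem iIndepFun.integral_norm_sum_pow_four_le (hY : iIndepFun Y μ)
    (hmeas : ∀ i, Measurable (Y i)) (hL4 : ∀ i, MemLp (Y i) 4 μ) (h0 : ∀ i, ∫ ω, Y i ω ∂μ = 0)
    (s : Finset ι) :
    ∫ ω, ‖∑ i ∈ s, Y i ω‖ ^ 4 ∂μ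
      ≤ ∑ i ∈ s, ∫ ω, ‖Y i ω‖ ^ 4 ∂μ + 3 * (∑ i ∈ s, ∫ ω, ‖Y i ω‖ ^ 2 ∂μ) ^ 2 := by
  classical
  induction s using Finset.induction_on with
  | empty => simp
  | insert k s hk ih =>
    have hindep := (hY.indepFun_fun_finsetSum_of_notMem hmeas hk).symm
    have hsum0 : ∫ ω, ∑ i ∈ s, Y i ω ∂μ = 0 := by
      rw [integral_finsetSum s fun i _ ↦ (hL4 i).integrable (by norm_num)]
      exact Finset.sum_eq_zero fun i _ ↦ h0 i
    have hsq := hY.integral_norm_sum_sq hmeas (fun i ↦ (hL4 i).mono_exponent (by norm_num)) h0 s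
    have hstep := hindep.integral_norm_add_pow_four_le (hL4 k) (memLp_finsetSum s fun i _ ↦ hL4 i)
      (h0 k) hsum0
    simp_rw [Finset.sum_insert hk]
    rw [hsq] at hstep
    linarith [sq_nonneg (∫ ω, ‖Y k ω‖ ^ 2 ∂μ)]

end ProbabilityTheory

/-- **Fourth-moment Monte Carlo bound.**
Let `ν` be a probability distribution on a separable Hilbert space `H` with mean
`zbar = ∫ x ∂ν` and finite fourth moment.  If `z 0, ..., z (N-1)` are independent random
variables on a probability space `(Ω, μ)`, each with law `ν`, then the sample mean
`ẑ = N⁻¹ ∑ z k` satisfies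
`E ‖ẑ - zbar‖⁴ ≤ (∫ ‖x - zbar‖⁴ ∂ν + 3 (∫ ‖x - zbar‖² ∂ν)²) / N²`. -/
theorem stmt_7 {H : Type*} [NormedAddCommGroup H] [InnerProductSpace ℝ H] [CompleteSpace H]
    [MeasurableSpace H] [BorelSpace H] [SecondCountableTopology H]
    {Ω : Type*} [MeasurableSpace Ω] (μ : Measure Ω) [IsProbabilityMeasure μ]
    (ν : Measure H) [IsProbabilityMeasure ν]
    (N : ℕ) (hN : 0 < N)
    (z : Fin N → Ω → H)
    (hmeas : ∀ k, Measurable (z k))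
    (hindep : ProbabilityTheory.iIndepFun z μ)
    (hid : ∀ k, Measure.map (z k) μ = ν)
    (hmom : MemLp (id : H → H) 4 ν)
    (zbar : H) (hzbar : zbar = ∫ x, x ∂ν) :
    ∫ ω, ‖(N : ℝ)⁻¹ • (∑ k, z k ω) - zbar‖ ^ 4 ∂μ
      ≤ ((∫ x, ‖x - zbar‖ ^ 4 ∂ν) + 3 * (∫ x, ‖x - zbar‖ ^ 2 ∂ν) ^ 2) / N ^ 2 := by
  set Y : Fin N → Ω → H := fun k ω ↦ z k ω - zbar
  have hlaw (k : Fin N) : IdentDistrib (Y k) (fun x ↦ x - zbar) μ ν :=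
    (show IdentDistrib (z k) id μ ν from
      ⟨(hmeas k).aemeasurable, aemeasurable_id, by rw [hid k, Measure.map_id]⟩).comp
      (measurable_id.sub_const zbar)
  have hY4 (k : Fin N) : MemLp (Y k) 4 μ := (hlaw k).memLp_iff.2 (hmom.sub (memLp_const zbar))
  have hY0 (k : Fin N) : ∫ ω, Y k ω ∂μ = 0 := by
    rw [(hlaw k).integral_eq,
      integral_sub (f := fun x ↦ x) (hmom.integrable (by norm_num)) (integrable_const zbar)]
    simp [← hzbar]
  have hmoment (k : Fin N) (p : ℕ) : ∫ ω, ‖Y k ω‖ ^ p ∂μ = ∫ x, ‖x - zbar‖ ^ p ∂ν :=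
    (hlaw k).norm.pow.integral_eq
  have hYindep : iIndepFun Y μ :=
    hindep.comp (fun _ x ↦ x - zbar) fun _ ↦ measurable_id.sub_const zbar
  have key := hYindep.integral_norm_sum_pow_four_le (fun k ↦ (hmeas k).sub_const zbar) hY4 hY0
    Finset.univ
  simp only [hmoment, Finset.sum_const, Finset.card_univ, Fintype.card_fin, nsmul_eq_mul] at key
  have hmean (ω : Ω) : (N : ℝ)⁻¹ • (∑ k, z k ω) - zbar = (N : ℝ)⁻¹ • ∑ k, Y k ω := by
    simpa only [Finset.card_univ, Fintype.card_fin] using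
      Finset.inv_card_smul_sum_sub (Finset.univ_nonempty_iff.2 ⟨⟨0, hN⟩⟩) (z · ω) zbar
  have hM4 : 0 ≤ ∫ x, ‖x - zbar‖ ^ 4 ∂ν := integral_nonneg fun x ↦ by positivity
  have hN1 : (1 : ℝ) ≤ N := by exact_mod_cast hN
  calc ∫ ω, ‖(N : ℝ)⁻¹ • (∑ k, z k ω) - zbar‖ ^ 4 ∂μ
      = (N : ℝ)⁻¹ ^ 4 * ∫ ω, ‖∑ k, Y k ω‖ ^ 4 ∂μ := by
        simp_rw [hmean, norm_smul, mul_pow, norm_inv, RCLike.norm_natCast]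
        exact integral_const_mul _ _
    _ ≤ (N : ℝ)⁻¹ ^ 4 * (N * ∫ x, ‖x - zbar‖ ^ 4 ∂ν + 3 * (N * ∫ x, ‖x - zbar‖ ^ 2 ∂ν) ^ 2) := by
        gcongr
    _ ≤ _ := by
        field_simp
        nlinarith
end

section
/- Let F(x) = ∑_{|α| ≤ n} c_α H_{γ,α}(x) be a Y-valued polynomial of Wiener-chaos degree n on a Gaussian space (X, γ), with Hermite coefficients c_α ∈ Y. Then for every u ∈ Y, ⟨u, H_Y u⟩_Y ≤ n ⟨u, C_Y u⟩_Y, where H_Y = E_γ[D_E F (D_E F)*] is the output derivative sensitivity operator and C_Y = E_γ[(F − F̄) ⊗ (F − F̄)] is the centered covariance; i.e., the derivative inverse inequality holds with constant K_D = n. -/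
/-!
Pairing with `u` reduces everything to the scalar chaos `g = ∑ α, ⟪c α, u⟫ H_α`, read in the
Gaussian coordinates `t = (⟪w i, x⟫)ᵢ`, which are standard normal, so `g` may be studied under
`N(0, I)`. Stein's identity makes the normalized Hermite products `H_α` orthonormal there, and
`∂ⱼ H_α = √(α j) H_{α - eⱼ}`. By Parseval, `∫ (∂ⱼ g)² = ∑ α, α j ⟪c α, u⟫²`, while the variance
of `g` is `∑_{α ≠ 0} ⟪c α, u⟫²`; summing over `j` gives `∑ α, |α| ⟪c α, u⟫² ≤ n Var g`.
-/

open MeasureTheory RealInnerProductSpace ProbabilityTheory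

/-- The normalized probabilists' Hermite polynomial `He_k / √(k!)`, orthonormal in `L²(N(0,1))`. -/
noncomputable def normHermite (k : ℕ) (t : ℝ) : ℝ :=
  Polynomial.aeval t (Polynomial.hermite k) / Real.sqrt (Nat.factorial k)

open Polynomial

section GaussianPolynomial

variable {R : Type*} [CommRing R] [Algebra R ℝ]

lemma integrable_pow_gaussianReal (μ : ℝ) (v : NNReal) (k : ℕ) :
    Integrable (fun x : ℝ => x ^ k) (gaussianReal μ v) := by
  refine ((memLp_id_gaussianReal k).integrable_norm_pow').mono' (by fun_prop) ?_
  exact ae_of_all _ fun x => by simp [norm_pow]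

lemma integrable_aeval_gaussianReal (μ : ℝ) (v : NNReal) (p : R[X]) :
    Integrable (fun x : ℝ => aeval x p) (gaussianReal μ v) := by
  induction p using Polynomial.induction_on' with
  | add p q hp hq => simp only [map_add]; exact hp.add hq
  | monomial k a => simpa using (integrable_pow_gaussianReal μ v k).const_mul (algebraMap R ℝ a)

lemma integrable_gaussianPDFReal_mul_aeval (p : R[X]) :
    Integrable fun x : ℝ => gaussianPDFReal 0 1 x * aeval x p := by
  have h := integrable_aeval_gaussianReal 0 1 p
  rw [gaussianReal_of_var_ne_zero 0 one_ne_zero, integrable_withDensity_iff_integrable_smul'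
    (measurable_gaussianPDF 0 1) (ae_of_all _ fun _ => gaussianPDF_lt_top)] at h
  simpa [toReal_gaussianPDF] using h

lemma hasDerivAt_gaussianPDFReal (x : ℝ) :
    HasDerivAt (gaussianPDFReal 0 1) (-x * gaussianPDFReal 0 1 x) x := by
  have hexponent : HasDerivAt (fun y : ℝ => -y ^ 2 / 2) (-x) x :=
    ((hasDerivAt_pow 2 x).neg.div_const 2).congr_deriv (by ring)
  have hpdf : gaussianPDFReal 0 1 = fun y => (√(2 * Real.pi))⁻¹ * Real.exp (-y ^ 2 / 2) := by
    ext y; simp [gaussianPDFReal]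
  rw [hpdf]
  exact (hexponent.exp.const_mul _).congr_deriv (by ring)

/-- Stein's identity. -/
theorem integral_mul_aeval_gaussianReal (q : R[X]) :
    ∫ x, x * aeval x q ∂gaussianReal 0 1 = ∫ x, aeval x (derivative q) ∂gaussianReal 0 1 := by
  have hxq : Integrable fun x => gaussianPDFReal 0 1 x * (x * aeval x q) :=
    (integrable_gaussianPDFReal_mul_aeval (X * q)).congr (ae_of_all _ fun x => by simp)
  have hderiv : ∀ x, HasDerivAt (fun y => gaussianPDFReal 0 1 y * aeval y q)
      (gaussianPDFReal 0 1 x * aeval x (derivative q) - gaussianPDFReal 0 1 x * (x * aeval x q))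
      x := fun x =>
    ((hasDerivAt_gaussianPDFReal x).mul (q.hasDerivAt_aeval x)).congr_deriv (by ring)
  have hzero := integral_eq_zero_of_hasDerivAt_of_integrable hderiv
    ((integrable_gaussianPDFReal_mul_aeval _).sub hxq) (integrable_gaussianPDFReal_mul_aeval q)
  rw [integral_sub (integrable_gaussianPDFReal_mul_aeval _) hxq, sub_eq_zero] at hzero
  simp only [integral_gaussianReal_eq_integral_smul one_ne_zero, smul_eq_mul]
  exact hzero.symm

/-- `X - d/dx` is the adjoint of `d/dx` in `L²(N(0,1))`. -/
theorem integral_aeval_mul_aeval_derivative (p q : R[X]) :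
    ∫ x, aeval x p * aeval x (derivative q) ∂gaussianReal 0 1
      = ∫ x, aeval x (X * p - derivative p) * aeval x q ∂gaussianReal 0 1 := by
  have hint (r s : R[X]) : Integrable (fun x => aeval x r * aeval x s) (gaussianReal 0 1) :=
    (integrable_aeval_gaussianReal 0 1 (r * s)).congr (ae_of_all _ fun x => map_mul _ r s)
  have hstein := integral_mul_aeval_gaussianReal (p * q)
  simp only [derivative_mul, map_add, map_mul] at hstein
  simp only [map_sub, map_mul, aeval_X, sub_mul]
  rw [integral_add (hint _ _) (hint _ _)] at hstein
  rw [integral_sub ((hint (X * p) q).congr (ae_of_all _ fun x => by simp)) (hint _ _)]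
  simp only [mul_assoc] at hstein ⊢
  linarith

end GaussianPolynomial

lemma derivative_hermite_succ (k : ℕ) :
    derivative (hermite (k + 1)) = (k + 1 : ℤ[X]) * hermite k := by
  induction k with
  | zero => simp
  | succ k ih =>
    rw [hermite_succ (k + 1), derivative_sub, derivative_mul, derivative_X, ih, derivative_mul,
      hermite_succ k]
    push_cast
    simp only [derivative_add, derivative_natCast, derivative_one, zero_mul, zero_add]
    ring

theorem integral_aeval_hermite_mul (j k : ℕ) :
    ∫ x, aeval x (hermite j) * aeval x (hermite k) ∂gaussianReal 0 1
      = if j = k then (j.factorial : ℝ) else 0 := by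
  induction j generalizing k with
  | zero =>
    cases k with
    | zero => simp
    | succ k =>
      simp_rw [mul_comm (aeval _ (hermite 0)), hermite_succ k,
        ← integral_aeval_mul_aeval_derivative, hermite_zero]
      simp
  | succ j ih =>
    rw [hermite_succ j, ← integral_aeval_mul_aeval_derivative]
    cases k with
    | zero => simp
    | succ k =>
      simp only [derivative_hermite_succ, map_mul, map_add, map_natCast, map_one]
      simp_rw [mul_left_comm (aeval _ (hermite j))]
      rw [integral_const_mul, ih k]
      split_ifs <;> simp_all [Nat.factorial_succ]

lemma normHermite_zero (t : ℝ) : normHermite 0 t = 1 := by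
  simp [normHermite]

lemma normHermite_mul_normHermite (j k : ℕ) (x : ℝ) :
    normHermite j x * normHermite k x
      = (√(j.factorial) * √(k.factorial))⁻¹ * aeval x (hermite j * hermite k) := by
  rw [normHermite, normHermite, map_mul]
  field_simp

lemma integrable_normHermite_mul (j k : ℕ) :
    Integrable (fun x => normHermite j x * normHermite k x) (gaussianReal 0 1) := by
  simp_rw [normHermite_mul_normHermite]
  exact (integrable_aeval_gaussianReal 0 1 _).const_mul _

theorem integral_normHermite_mul (j k : ℕ) :
    ∫ x, normHermite j x * normHermite k x ∂gaussianReal 0 1 = if j = k then 1 else 0 := by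
  simp_rw [normHermite_mul_normHermite, map_mul]
  rw [integral_const_mul, integral_aeval_hermite_mul]
  split_ifs with h
  · subst h
    rw [← Real.sqrt_mul (by positivity), Real.sqrt_mul_self (by positivity),
      inv_mul_cancel₀ (by positivity)]
  · rw [mul_zero]

lemma hasDerivAt_normHermite (k : ℕ) (t : ℝ) :
    HasDerivAt (normHermite k) (√k * normHermite (k - 1) t) t := by
  refine ((hermite k).hasDerivAt_aeval t).div_const _ |>.congr_deriv ?_
  cases k with
  | zero => simp
  | succ k =>
    have hsqrt : √((k + 1).factorial : ℝ) = √(k + 1 : ℝ) * √(k.factorial) := by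
      rw [Nat.factorial_succ, Nat.cast_mul, Real.sqrt_mul (by positivity)]
      push_cast; ring_nf
    rw [derivative_hermite_succ, normHermite, hsqrt]
    simp only [map_mul, map_add, map_natCast, map_one, Nat.add_sub_cancel, Nat.cast_add,
      Nat.cast_one]
    field_simp
    rw [Real.sq_sqrt (by positivity), mul_comm]

@[fun_prop]
lemma differentiable_normHermite (k : ℕ) : Differentiable ℝ (normHermite k) :=
  fun t => (hasDerivAt_normHermite k t).differentiableAt

noncomputable abbrev stdGaussian (ι : Type*) [Fintype ι] : Measure (ι → ℝ) :=
  Measure.pi fun _ => gaussianReal 0 1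

section HermiteProd

variable {ι : Type*} [Fintype ι]

noncomputable def hermiteProd (α : ι → ℕ) (t : ι → ℝ) : ℝ := ∏ i, normHermite (α i) (t i)

lemma hermiteProd_zero (t : ι → ℝ) : hermiteProd 0 t = 1 := by
  simp [hermiteProd, normHermite_zero]

@[fun_prop]
lemma differentiable_hermiteProd (α : ι → ℕ) : Differentiable ℝ (hermiteProd α) := by
  unfold hermiteProd; fun_prop

lemma integrable_hermiteProd_mul (α β : ι → ℕ) :
    Integrable (fun t => hermiteProd α t * hermiteProd β t)
      (stdGaussian ι) := by
  simp_rw [hermiteProd, ← Finset.prod_mul_distrib]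
  exact Integrable.fintype_prod fun i => integrable_normHermite_mul (α i) (β i)

theorem integral_hermiteProd_mul (α β : ι → ℕ) :
    ∫ t, hermiteProd α t * hermiteProd β t ∂stdGaussian ι
      = if α = β then 1 else 0 := by
  simp_rw [hermiteProd, ← Finset.prod_mul_distrib]
  rw [integral_fintype_prod_eq_prod (fun i x => normHermite (α i) x * normHermite (β i) x)]
  simp_rw [integral_normHermite_mul, Finset.prod_boole, funext_iff]
  simp

lemma integrable_hermiteProd (α : ι → ℕ) :
    Integrable (hermiteProd α) (stdGaussian ι) := by
  simpa [hermiteProd_zero] using integrable_hermiteProd_mul α 0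

lemma integral_hermiteProd (α : ι → ℕ) :
    ∫ t, hermiteProd α t ∂stdGaussian ι = if α = 0 then 1 else 0 := by
  simpa [hermiteProd_zero] using integral_hermiteProd_mul α 0

lemma sq_sum_hermiteProd {κ : Type*} (s : Finset κ) (idx : κ → ι → ℕ) (b : κ → ℝ) (t : ι → ℝ) :
    (∑ k ∈ s, b k * hermiteProd (idx k) t) ^ 2
      = ∑ k ∈ s, ∑ l ∈ s, b k * b l * (hermiteProd (idx k) t * hermiteProd (idx l) t) := by
  rw [sq, Finset.sum_mul_sum]
  exact Finset.sum_congr rfl fun k _ => Finset.sum_congr rfl fun l _ => by ring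

lemma integrable_sq_sum_hermiteProd {κ : Type*} (s : Finset κ) (idx : κ → ι → ℕ) (b : κ → ℝ) :
    Integrable (fun t => (∑ k ∈ s, b k * hermiteProd (idx k) t) ^ 2)
      (stdGaussian ι) := by
  simp_rw [sq_sum_hermiteProd]
  exact integrable_finsetSum _ fun k _ => integrable_finsetSum _ fun l _ =>
    (integrable_hermiteProd_mul _ _).const_mul _

/-- Parseval's identity for the orthonormal family `hermiteProd`. -/
theorem integral_sq_sum_hermiteProd {κ : Type*} (s : Finset κ) (idx : κ → ι → ℕ)
    (hidx : Set.InjOn idx s) (b : κ → ℝ) :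
    ∫ t, (∑ k ∈ s, b k * hermiteProd (idx k) t) ^ 2 ∂stdGaussian ι
      = ∑ k ∈ s, b k ^ 2 := by
  simp_rw [sq_sum_hermiteProd]
  rw [integral_finsetSum _ fun k _ => integrable_finsetSum _ fun l _ =>
    (integrable_hermiteProd_mul _ _).const_mul _]
  refine Finset.sum_congr rfl fun k hk => ?_
  rw [integral_finsetSum _ fun l _ => (integrable_hermiteProd_mul _ _).const_mul _,
    Finset.sum_eq_single_of_mem k hk fun l hl hlk => ?_]
  · rw [integral_const_mul, integral_hermiteProd_mul, if_pos rfl, mul_one, sq]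
  · rw [integral_const_mul, integral_hermiteProd_mul,
      if_neg fun h => hlk (hidx hl hk h.symm), mul_zero]

variable [DecidableEq ι]

lemma hermiteProd_eq_mul_prod_erase (α : ι → ℕ) (t : ι → ℝ) (j : ι) :
    hermiteProd α t
      = normHermite (α j) (t j) * ∏ i ∈ Finset.univ.erase j, normHermite (α i) (t i) :=
  (Finset.mul_prod_erase _ (fun i => normHermite (α i) (t i)) (Finset.mem_univ j)).symm

lemma hasDerivAt_hermiteProd_update (α : ι → ℕ) (t : ι → ℝ) (j : ι) :
    HasDerivAt (fun s => hermiteProd α (Function.update t j s))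
      (√(α j) * hermiteProd (α - Pi.single j 1) t) (t j) := by
  have hrest : ∀ (β : ι → ℕ) (t' : ι → ℝ), (∀ i ≠ j, β i = α i ∧ t' i = t i) →
      ∏ i ∈ Finset.univ.erase j, normHermite (β i) (t' i)
        = ∏ i ∈ Finset.univ.erase j, normHermite (α i) (t i) := fun β t' h =>
    Finset.prod_congr rfl fun i hi => by
      rw [(h i (Finset.ne_of_mem_erase hi)).1, (h i (Finset.ne_of_mem_erase hi)).2]
  simp_rw [hermiteProd_eq_mul_prod_erase _ _ j, Function.update_self,
    hrest _ (Function.update t j _) fun i hi => ⟨rfl, Function.update_of_ne hi _ _⟩,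
    hrest (α - Pi.single j 1) t fun i hi => ⟨by simp [Pi.single_eq_of_ne hi], rfl⟩]
  simpa [mul_assoc] using (hasDerivAt_normHermite (α j) (t j)).mul_const _

end HermiteProd

lemma fderiv_apply_single_of_hasDerivAt_update {ι E : Type*} [Fintype ι] [DecidableEq ι]
    [NormedAddCommGroup E] [NormedSpace ℝ E] {g : (ι → ℝ) → E} {t : ι → ℝ}
    (hg : DifferentiableAt ℝ g t) {j : ι} {d : E}
    (hd : HasDerivAt (fun s => g (Function.update t j s)) d (t j)) :
    fderiv ℝ g t (Pi.single j 1) = d :=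
  (hg.hasFDerivAt.comp_hasDerivAt_of_eq (t j) (hasDerivAt_update t j (t j))
    (Function.update_eq_self j t).symm).unique hd

section HermiteExpansion

variable {ι : Type*} [Fintype ι]

noncomputable def hermiteExpansion (A : Finset (ι → ℕ)) (b : (ι → ℕ) → ℝ) (t : ι → ℝ) : ℝ :=
  ∑ α ∈ A, b α * hermiteProd α t

variable (A : Finset (ι → ℕ)) (b : (ι → ℕ) → ℝ)

@[fun_prop]
lemma differentiable_hermiteExpansion : Differentiable ℝ (hermiteExpansion A b) := by
  unfold hermiteExpansion; fun_prop

lemma integral_hermiteExpansion :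
    ∫ t, hermiteExpansion A b t ∂stdGaussian ι
      = if 0 ∈ A then b 0 else 0 := by
  unfold hermiteExpansion
  rw [integral_finsetSum _ fun α _ => (integrable_hermiteProd α).const_mul _]
  simp_rw [integral_const_mul, integral_hermiteProd, mul_ite, mul_one, mul_zero,
    Finset.sum_ite_eq']

lemma hermiteExpansion_sub_integral (t : ι → ℝ) :
    hermiteExpansion A b t - ∫ t, hermiteExpansion A b t ∂stdGaussian ι
      = hermiteExpansion (A.erase 0) b t := by
  rw [integral_hermiteExpansion]
  unfold hermiteExpansion
  split_ifs with h
  · rw [← Finset.add_sum_erase A _ h, hermiteProd_zero, mul_one, add_sub_cancel_left]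
  · rw [sub_zero, Finset.erase_eq_of_notMem h]

lemma integral_sq_sub_integral_hermiteExpansion :
    ∫ t, (hermiteExpansion A b t
        - ∫ t, hermiteExpansion A b t ∂stdGaussian ι) ^ 2
        ∂stdGaussian ι
      = ∑ α ∈ A.erase 0, b α ^ 2 := by
  simp_rw [hermiteExpansion_sub_integral, hermiteExpansion]
  exact integral_sq_sum_hermiteProd _ id Function.injective_id.injOn b

variable [DecidableEq ι]

lemma fderiv_hermiteExpansion_apply_single (t : ι → ℝ) (j : ι) :
    fderiv ℝ (hermiteExpansion A b) t (Pi.single j 1)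
      = ∑ α ∈ A, b α * √(α j) * hermiteProd (α - Pi.single j 1) t := by
  refine fderiv_apply_single_of_hasDerivAt_update (by fun_prop) ?_
  unfold hermiteExpansion
  refine HasDerivAt.fun_sum fun α _ => ?_
  simpa only [mul_assoc] using (hasDerivAt_hermiteProd_update α t j).const_mul (b α)

lemma integral_sq_fderiv_hermiteExpansion_apply_single (j : ι) :
    ∫ t, (fderiv ℝ (hermiteExpansion A b) t (Pi.single j 1)) ^ 2
        ∂stdGaussian ι
      = ∑ α ∈ A, (α j : ℝ) * b α ^ 2 := by
  have hlower : Set.InjOn (fun α : ι → ℕ => α - Pi.single j 1) {α | α j ≠ 0} := by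
    intro α hα β hβ h
    funext i
    have hi := congrFun h i
    by_cases hij : i = j
    · subst hij
      simp only [Pi.sub_apply, Pi.single_eq_same] at hi
      have : α i ≠ 0 ∧ β i ≠ 0 := ⟨hα, hβ⟩
      omega
    · simpa [Pi.single_eq_of_ne hij] using hi
  have hfilter : ∀ t, ∑ α ∈ A, b α * √(α j) * hermiteProd (α - Pi.single j 1) t
      = ∑ α ∈ A.filter (fun α => α j ≠ 0), b α * √(α j) * hermiteProd (α - Pi.single j 1) t :=
    fun t => (Finset.sum_filter_of_ne fun α _ h hα => by simp [hα] at h).symm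
  simp_rw [fderiv_hermiteExpansion_apply_single, hfilter]
  rw [integral_sq_sum_hermiteProd _ _ (hlower.mono (by simp)), Finset.sum_filter]
  refine Finset.sum_congr rfl fun α _ => ?_
  split_ifs with hα
  · rw [mul_pow, Real.sq_sqrt (by positivity), mul_comm]
  · simp [not_not.1 hα]

/-- The reverse Poincaré inequality on the Wiener chaos of degree at most `n`: differentiation
multiplies the `L²` mass of the chaos component `α` by `|α| = ∑ i, α i ≤ n`. -/
theorem integral_sum_sq_fderiv_hermiteExpansion_le {n : ℕ} (hdeg : ∀ α ∈ A, ∑ i, α i ≤ n) :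
    ∫ t, ∑ j, (fderiv ℝ (hermiteExpansion A b) t (Pi.single j 1)) ^ 2
        ∂stdGaussian ι
      ≤ n * ∫ t, (hermiteExpansion A b t
        - ∫ t, hermiteExpansion A b t ∂stdGaussian ι) ^ 2
        ∂stdGaussian ι := by
  rw [integral_finsetSum _ fun j _ => by
    simp_rw [fderiv_hermiteExpansion_apply_single]; exact integrable_sq_sum_hermiteProd _ _ _]
  simp_rw [integral_sq_fderiv_hermiteExpansion_apply_single,
    integral_sq_sub_integral_hermiteExpansion]
  rw [Finset.sum_comm, Finset.mul_sum]
  simp_rw [← Finset.sum_mul]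
  calc ∑ α ∈ A, (∑ j, (α j : ℝ)) * b α ^ 2 = ∑ α ∈ A.erase 0, (∑ j, (α j : ℝ)) * b α ^ 2 :=
        (Finset.sum_erase A (by simp)).symm
    _ ≤ ∑ α ∈ A.erase 0, (n : ℝ) * b α ^ 2 := Finset.sum_le_sum fun α hα => by
        gcongr
        exact_mod_cast hdeg α (Finset.mem_of_mem_erase hα)

end HermiteExpansion

section GaussianCoordinates

variable {X Y : Type*} [NormedAddCommGroup X] [InnerProductSpace ℝ X]
  [NormedAddCommGroup Y] [InnerProductSpace ℝ Y] {ι : Type*} [Fintype ι]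
  (T : X →L[ℝ] (ι → ℝ)) (A : Finset (ι → ℕ)) (c : (ι → ℕ) → Y)

lemma inner_sum_hermiteProd_smul (t : ι → ℝ) (u : Y) :
    ⟪∑ α ∈ A, hermiteProd α t • c α, u⟫ = hermiteExpansion A (fun α => ⟪c α, u⟫) t := by
  simp only [hermiteExpansion, sum_inner, real_inner_smul_left, mul_comm]

lemma inner_fderiv_sum_hermiteProd_comp_smul (x v : X) (u : Y) :
    ⟪fderiv ℝ (fun x => ∑ α ∈ A, hermiteProd α (T x) • c α) x v, u⟫
      = fderiv ℝ (hermiteExpansion A fun α => ⟪c α, u⟫) (T x) (T v) := by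
  have hF : Differentiable ℝ fun x => ∑ α ∈ A, hermiteProd α (T x) • c α := by fun_prop
  have hg := differentiable_hermiteExpansion A fun α => ⟪c α, u⟫
  calc ⟪fderiv ℝ (fun x => ∑ α ∈ A, hermiteProd α (T x) • c α) x v, u⟫
      = fderiv ℝ (fun y => ⟪∑ α ∈ A, hermiteProd α (T y) • c α, u⟫) x v := by
        simp [fderiv_inner_apply ℝ (hF x) (differentiableAt_const u) v]
    _ = fderiv ℝ (hermiteExpansion A (fun α => ⟪c α, u⟫) ∘ T) x v := by
        simp_rw [inner_sum_hermiteProd_smul, Function.comp_def]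
    _ = fderiv ℝ (hermiteExpansion A fun α => ⟪c α, u⟫) (T x) (T v) := by
        rw [((hg (T x)).hasFDerivAt.comp x T.hasFDerivAt).fderiv, ContinuousLinearMap.comp_apply]

variable [MeasurableSpace X] [BorelSpace X] {γ : Measure X}

lemma integrable_sum_hermiteProd_comp_smul (hT : γ.map T = stdGaussian ι) :
    Integrable (fun x => ∑ α ∈ A, hermiteProd α (T x) • c α) γ := by
  refine integrable_finsetSum _ fun α _ => Integrable.smul_const ?_ _
  have hα := integrable_hermiteProd α
  rw [← hT] at hα
  exact (integrable_map_measure hα.aestronglyMeasurable T.measurable.aemeasurable).1 hα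

lemma inner_integral_sum_hermiteProd_comp_smul [CompleteSpace Y]
    (hT : γ.map T = stdGaussian ι) (u : Y) :
    ⟪∫ x, ∑ α ∈ A, hermiteProd α (T x) • c α ∂γ, u⟫
      = ∫ t, hermiteExpansion A (fun α => ⟪c α, u⟫) t ∂stdGaussian ι := by
  rw [real_inner_comm, ← integral_inner (integrable_sum_hermiteProd_comp_smul T A c hT), ← hT,
    integral_map T.measurable.aemeasurable
      (differentiable_hermiteExpansion A _).continuous.aestronglyMeasurable]
  simp_rw [real_inner_comm _ u, inner_sum_hermiteProd_smul]

end GaussianCoordinates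

lemma tsum_sq_apply_eq_sum_single {m : ℕ} {v : ℕ → Fin m → ℝ}
    (hv : ∀ (i : Fin m) (j : ℕ), v j i = if (i : ℕ) = j then (1 : ℝ) else 0)
    (L : (Fin m → ℝ) →L[ℝ] ℝ) :
    ∑' j, (L (v j)) ^ 2 = ∑ j : Fin m, (L (Pi.single j 1)) ^ 2 := by
  have hv' : ∀ j, v j = if h : j < m then Pi.single ⟨j, h⟩ 1 else 0 := fun j => by
    ext i
    split_ifs with h
    · simp [hv, Pi.single_apply, Fin.ext_iff, eq_comm]
    · simp [hv, show (i : ℕ) ≠ j by omega]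
  rw [tsum_eq_sum (s := Finset.range m) fun j hj => by
    simp [hv', show ¬ j < m by simpa using hj], ← Fin.sum_univ_eq_sum_range]
  simp [hv']

/-- Here `x ↦ ⟪w i, x⟫` are the i.i.d. standard Gaussian coordinates of `γ` and `vt` is the
Cameron–Martin basis biorthogonal to them, so that `D_E F(x) (vt j) = fderiv ℝ F x (vt j)`: the left
side is `⟨u, H_Y u⟩` and the last integral is `⟨u, C_Y u⟩`. -/
theorem stmt_19_general {X Y : Type*}
    [NormedAddCommGroup X] [InnerProductSpace ℝ X]
    [MeasurableSpace X] [BorelSpace X]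
    [NormedAddCommGroup Y] [InnerProductSpace ℝ Y] [CompleteSpace Y]
    (γ : Measure X)
    (m : ℕ) (w : Fin m → X) (vt : ℕ → X)
    (hjoint : Measure.map (fun x => fun i : Fin m => ⟪w i, x⟫) γ
        = Measure.pi fun _ : Fin m => gaussianReal 0 1)
    (hbior : ∀ (i : Fin m) (j : ℕ), ⟪w i, vt j⟫ = if (i : ℕ) = j then (1 : ℝ) else 0)
    (n : ℕ) (A : Finset (Fin m → ℕ)) (hdeg : ∀ α ∈ A, (∑ i, α i) ≤ n)
    (c : (Fin m → ℕ) → Y)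
    (F : X → Y)
    (hF : ∀ x, F x = ∑ α ∈ A, (∏ i, normHermite (α i) ⟪w i, x⟫) • c α)
    (Fbar : Y) (hFbar : Fbar = ∫ x, F x ∂γ)
    (u : Y) :
    ∫ x, ∑' j : ℕ, ⟪fderiv ℝ F x (vt j), u⟫ ^ 2 ∂γ
      ≤ (n : ℝ) * ∫ x, ⟪F x - Fbar, u⟫ ^ 2 ∂γ := by
  set T : X →L[ℝ] (Fin m → ℝ) := ContinuousLinearMap.pi fun i => innerSL ℝ (w i)
  have hT : γ.map T = stdGaussian (Fin m) := hjoint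
  obtain rfl : F = fun x => ∑ α ∈ A, hermiteProd α (T x) • c α := funext hF
  subst hFbar
  set g := hermiteExpansion A fun α => ⟪c α, u⟫
  simp_rw [inner_fderiv_sum_hermiteProd_comp_smul,
    tsum_sq_apply_eq_sum_single (v := fun j => T (vt j)) hbior, inner_sub_left,
    inner_sum_hermiteProd_smul, inner_integral_sum_hermiteProd_comp_smul T A c hT]
  rw [← integral_map (f := fun t => ∑ j : Fin m, (fderiv ℝ g t (Pi.single j 1)) ^ 2)
      T.measurable.aemeasurable (Finset.measurable_sum _ fun j _ =>
        (measurable_fderiv_apply_const ℝ g _).pow_const 2).aestronglyMeasurable,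
    ← integral_map (f := fun t => (g t - ∫ t, g t ∂stdGaussian (Fin m)) ^ 2)
      T.measurable.aemeasurable (((differentiable_hermiteExpansion A _).continuous.sub
        continuous_const).pow 2).aestronglyMeasurable, hT]
  exact integral_sum_sq_fderiv_hermiteExpansion_le A _ hdeg

/-- **Derivative inverse inequality for Wiener chaos of degree `n` (`K_D = n`).**
Let `γ` be a centered Gaussian measure on a separable Hilbert space `X`.  Gaussian coordinates
are given by functionals `x ↦ ⟪w i, x⟫`, `i < m`, which are i.i.d. standard normal under `γ`
(the `w i` are `C^{-1}`-images of Cameron–Martin basis vectors), and `vt : ℕ → X` is the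
corresponding orthonormal basis of the Cameron–Martin space `E`, biorthogonal to the `w i`
(`⟪w i, vt j⟫ = δ_{ij}`), so that `D_E F(x) (vt j) = fderiv F x (vt j)`.  Let
`F x = ∑_{α ∈ A} (∏ i He_{α i}(⟪w i, x⟫)) • c α` be a `Y`-valued Hermite polynomial of
Wiener-chaos degree `≤ n` with coefficients `c α ∈ Y`, and `F̄ = E_γ[F]`.  Then for every
`u ∈ Y`, `⟨u, H_Y u⟩ = E_γ ∑_j ⟪D_E F(x) (vt j), u⟫² ≤ n E_γ ⟪F - F̄, u⟫² = n ⟨u, C_Y u⟩`. -/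
theorem stmt_19 {X Y : Type*}
    [NormedAddCommGroup X] [InnerProductSpace ℝ X] [CompleteSpace X]
    [MeasurableSpace X] [BorelSpace X]
    [NormedAddCommGroup Y] [InnerProductSpace ℝ Y] [CompleteSpace Y]
    (γ : Measure X) [IsProbabilityMeasure γ]
    (m : ℕ) (w : Fin m → X) (vt : ℕ → X)
    (hjoint : Measure.map (fun x => fun i : Fin m => ⟪w i, x⟫) γ
        = Measure.pi fun _ : Fin m => gaussianReal 0 1)
    (hbior : ∀ (i : Fin m) (j : ℕ), ⟪w i, vt j⟫ = if (i : ℕ) = j then (1 : ℝ) else 0)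
    (n : ℕ) (A : Finset (Fin m → ℕ)) (hdeg : ∀ α ∈ A, (∑ i, α i) ≤ n)
    (c : (Fin m → ℕ) → Y)
    (F : X → Y)
    (hF : ∀ x, F x = ∑ α ∈ A, (∏ i, normHermite (α i) ⟪w i, x⟫) • c α)
    (Fbar : Y) (hFbar : Fbar = ∫ x, F x ∂γ)
    (u : Y) :
    ∫ x, ∑' j : ℕ, ⟪fderiv ℝ F x (vt j), u⟫ ^ 2 ∂γ
      ≤ (n : ℝ) * ∫ x, ⟪F x - Fbar, u⟫ ^ 2 ∂γ :=
  stmt_19_general γ m w vt hjoint hbior n A hdeg c F hF Fbar hFbar u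
end
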